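/- arXiv:2001.05390 — 3 statements merged into one kernel-verified Lean document; each statement's English description precedes it below -/
import Mathlib

section
/- Let σ = (C₁ ⊔ … ⊔ C_m ⊑ D₁ ⊔ … ⊔ Dₙ) be an interval-safe PL subsumption query such that each C_i is normalized with respect to K and O. Then K_O^- ∪ pos(O_K^+) ⊨ σ if and only if for every i ∈ [1,m] there exists j ∈ [1,n] such that K_O^- ∪ pos(O_K^+) ⊨ C_i ⊑ D_j. -/
/-! Core formalization of the policy logic `PL` of Bonatti et al.,
    "Machine Understandable Policies and GDPR Compliance Checking". -/

namespace PLPaper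

/-- Simple `PL` concepts: `C ::= A | ⊥ | ∃f.[l,u] | ∃R.C | C ⊓ C`. -/
inductive SPL : Type
  | atom  : ℕ → SPL
  | bot   : SPL
  | ival  : ℕ → ℤ → ℤ → SPL
  | ex    : ℕ → SPL → SPL
  | inter : SPL → SPL → SPL
  deriving DecidableEq

/-- A full `PL` concept: a union `C₁ ⊔ … ⊔ Cₙ` of simple concepts, given as a list. -/
abbrev PLC := List SPL

/-- Axioms of a `PL` knowledge base. -/
inductive PLAx : Type
  | funcRole : ℕ → PLAx              -- func(R), R a role name
  | funcProp : ℕ → PLAx              -- func(f), f a concrete property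
  | rangeAx  : ℕ → ℕ → PLAx          -- range(R, A)
  | incl     : ℕ → ℕ → PLAx          -- A ⊑ B
  | disj     : ℕ → ℕ → PLAx          -- disj(A, B)
  deriving DecidableEq

/-- A description-logic interpretation (concept names, role names, concrete properties). -/
structure Interp : Type 1 where
  Δ : Type
  nonempty : Nonempty Δ
  conc : ℕ → Set Δ
  role : ℕ → Set (Δ × Δ)
  cprop : ℕ → Set (Δ × ℤ)

/-- Semantics of simple `PL` concepts. -/
def SPL.sem (I : Interp) : SPL → Set I.Δ
  | .atom a => I.conc a
  | .bot => ∅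
  | .ival f l u => {d | ∃ i : ℤ, l ≤ i ∧ i ≤ u ∧ (d, i) ∈ I.cprop f}
  | .ex r c => {d | ∃ e, (d, e) ∈ I.role r ∧ e ∈ c.sem I}
  | .inter c d => c.sem I ∩ d.sem I

/-- Semantics of full `PL` concepts (finite unions). -/
def semL (I : Interp) (C : PLC) : Set I.Δ := {d | ∃ c ∈ C, d ∈ c.sem I}

/-- Satisfaction of a `PL` axiom. -/
def Interp.satAx (I : Interp) : PLAx → Prop
  | .funcRole r => ∀ ⦃d e e'⦄, (d, e) ∈ I.role r → (d, e') ∈ I.role r → e = e'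
  | .funcProp f => ∀ ⦃d i j⦄, (d, i) ∈ I.cprop f → (d, j) ∈ I.cprop f → i = j
  | .rangeAx r a => ∀ ⦃d e⦄, (d, e) ∈ I.role r → e ∈ I.conc a
  | .incl a b => I.conc a ⊆ I.conc b
  | .disj a b => I.conc a ∩ I.conc b = ∅

def Interp.satKB (I : Interp) (K : Set PLAx) : Prop := ∀ ax ∈ K, I.satAx ax

/-- `K ⊨ C ⊑ D` for full `PL` concepts. -/
def Entails (K : Set PLAx) (C D : PLC) : Prop :=
  ∀ I : Interp, I.satKB K → semL I C ⊆ semL I D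

/-- The multiset of conjuncts of a simple concept (intersections treated as sets:
    ordering and parenthesization of conjuncts is irrelevant). -/
def SPL.conj : SPL → Multiset SPL
  | .inter c d => c.conj + d.conj
  | c => {c}

/-- `⊑*`: the reflexive–transitive closure of the atomic inclusions of `K`. -/
def SubStar (K : Set PLAx) : ℕ → ℕ → Prop :=
  Relation.ReflTransGen fun a b => PLAx.incl a b ∈ K

/-- One application of one of the seven normalization rules w.r.t. `K` (Table 3);
    intersections are treated as sets of conjuncts, and rules may be applied to
    subconcepts (congruence). -/
inductive Rw (K : Set PLAx) : SPL → SPL → Prop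
  /-- rule 1: `⊥ ⊓ D ⇝ ⊥` -/
  | botConj (C : SPL) :
      SPL.bot ∈ C.conj → C ≠ SPL.bot → Rw K C SPL.bot
  /-- rule 2: `∃R.⊥ ⇝ ⊥` -/
  | exBot (r : ℕ) : Rw K (SPL.ex r SPL.bot) SPL.bot
  /-- rule 3: `∃f.[l,u] ⇝ ⊥` if `l > u` -/
  | emptyIval (f : ℕ) (l u : ℤ) : u < l → Rw K (SPL.ival f l u) SPL.bot
  /-- rule 4: merge existential restrictions over a functional role -/
  | funcRole (C C' : SPL) (r : ℕ) (D D' : SPL) (rest : Multiset SPL) :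
      PLAx.funcRole r ∈ K →
      C.conj = {SPL.ex r D, SPL.ex r D'} + rest →
      C'.conj = {SPL.ex r (SPL.inter D D')} + rest →
      Rw K C C'
  /-- rule 5: merge interval constraints over a functional concrete property -/
  | funcProp (C C' : SPL) (f : ℕ) (l₁ u₁ l₂ u₂ : ℤ) (rest : Multiset SPL) :
      PLAx.funcProp f ∈ K →
      C.conj = {SPL.ival f l₁ u₁, SPL.ival f l₂ u₂} + rest →
      C'.conj = {SPL.ival f (max l₁ l₂) (min u₁ u₂)} + rest →
      Rw K C C'
  /-- rule 6: add range information -/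
  | rangeRule (C C' : SPL) (r a : ℕ) (D : SPL) (rest : Multiset SPL) :
      PLAx.rangeAx r a ∈ K →
      SPL.atom a ∉ D.conj → SPL.bot ∉ D.conj →
      C.conj = {SPL.ex r D} + rest →
      C'.conj = {SPL.ex r (SPL.inter D (SPL.atom a))} + rest →
      Rw K C C'
  /-- rule 7: disjointness clash -/
  | disjRule (C : SPL) (a₁ a₂ b₁ b₂ : ℕ) :
      SPL.atom a₁ ∈ C.conj → SPL.atom a₂ ∈ C.conj →
      SubStar K a₁ b₁ → SubStar K a₂ b₂ →
      PLAx.disj b₁ b₂ ∈ K →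
      Rw K C SPL.bot
  /-- rules may be applied inside existential restrictions -/
  | exCongr (r : ℕ) (c c' : SPL) : Rw K c c' → Rw K (SPL.ex r c) (SPL.ex r c')
  /-- rules may be applied to one conjunct of an intersection -/
  | interCongr (C C' c c' : SPL) (rest : Multiset SPL) :
      Rw K c c' →
      C.conj = {c} + rest → C'.conj = {c'} + rest →
      Rw K C C'

/-- A simple concept is normalized w.r.t. `K` when no rule is applicable. -/
def Normalized (K : Set PLAx) (C : SPL) : Prop := ¬ ∃ C', Rw K C C'

/-- All interval constraints `∃f.[l,u]` occurring (at any depth) in a simple concept. -/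
def SPL.ivalsOf : SPL → List (ℕ × ℤ × ℤ)
  | .ival f l u => [(f, l, u)]
  | .ex _ c => c.ivalsOf
  | .inter c d => c.ivalsOf ++ d.ivalsOf
  | _ => []

def ivalsL (C : PLC) : List (ℕ × ℤ × ℤ) := C.flatMap SPL.ivalsOf

/-- The integers occurring as interval endpoints in a full concept. -/
def endpointsL (D : PLC) : List ℤ := (ivalsL D).flatMap fun t => [t.2.1, t.2.2]

/-- A subsumption `C ⊑ D` is interval safe iff every interval of `C` is either
    contained in, or disjoint from, every interval of `D`. -/
def IntervalSafe (C D : PLC) : Prop :=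
  ∀ p ∈ ivalsL C, ∀ q ∈ ivalsL D,
    Set.Icc p.2.1 p.2.2 ⊆ Set.Icc q.2.1 q.2.2 ∨
      Set.Icc p.2.1 p.2.2 ∩ Set.Icc q.2.1 q.2.2 = ∅

/-- Given the ascending chain `x₀ < x₁ < … < x_{r+1}` of cut points, produce the
    subinterval constraints `[xᵢ,xᵢ]`, `[xᵢ+1, xᵢ₊₁-1]`, …, `[x_{r+1},x_{r+1}]`. -/
def chainPieces (f : ℕ) : List ℤ → List SPL
  | [] => []
  | [x] => [SPL.ival f x x]
  | x :: y :: rest =>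
      SPL.ival f x x :: SPL.ival f (x + 1) (y - 1) :: chainPieces f (y :: rest)

/-- The endpoints of `D` lying in `[l,u]`, sorted in increasing order, without duplicates. -/
def cutPoints (E : List ℤ) (l u : ℤ) : List ℤ :=
  ((E.filter fun x => decide (l ≤ x ∧ x ≤ u)).toFinset).sort (· ≤ ·)

/-- Interval splitting of a single constraint `∃f.[l,u]` w.r.t. the endpoints `E`. -/
def splitIval (E : List ℤ) (f : ℕ) (l u : ℤ) : List SPL :=
  chainPieces f (l :: (cutPoints E l u ++ [u]))

/-- Interval normalization of a simple concept w.r.t. endpoints `E`: replace each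
    interval constraint by the union of its pieces and lift unions to the top level
    (distributivity of `⊓` over `⊔` and `∃R.(C₁ ⊔ C₂) ≡ ∃R.C₁ ⊔ ∃R.C₂`). -/
def SPL.splitC (E : List ℤ) : SPL → List SPL
  | .atom a => [.atom a]
  | .bot => [.bot]
  | .ival f l u => splitIval E f l u
  | .ex r c => (c.splitC E).map (SPL.ex r)
  | .inter c d => (c.splitC E).flatMap fun c' => (d.splitC E).map fun d' => SPL.inter c' d'

/-- `split(C, D)` for full `PL` concepts. -/
def splitL (C D : PLC) : PLC := C.flatMap (SPL.splitC (endpointsL D))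

/-- Size of (the encoding of) a simple concept. -/
def SPL.size : SPL → ℕ
  | .atom _ => 1
  | .bot => 1
  | .ival _ _ _ => 1
  | .ex _ c => c.size + 1
  | .inter c d => c.size + d.size + 1

/-- Size of a full concept. -/
def sizeL (C : PLC) : ℕ := (C.map SPL.size).sum + 1

/-- The structural subsumption algorithm `STS` (Algorithm 1): `STS K C D` holds
    iff the algorithm returns `true` on the elementary subsumption `C ⊑ D`. -/
inductive STS (K : Set PLAx) : SPL → SPL → Prop
  | botCase (D : SPL) : STS K SPL.bot D
  | atomCase (C : SPL) (a a' : ℕ) :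
      SPL.atom a' ∈ C.conj → SubStar K a' a → STS K C (SPL.atom a)
  | ivalCase (C : SPL) (f : ℕ) (l u l' u' : ℤ) :
      SPL.ival f l' u' ∈ C.conj → l ≤ l' → u' ≤ u → STS K C (SPL.ival f l u)
  | exCase (C C' D' : SPL) (r : ℕ) :
      SPL.ex r C' ∈ C.conj → STS K C' D' → STS K C (SPL.ex r D')
  | interCase (C D' D'' : SPL) :
      STS K C D' → STS K C D'' → STS K C (SPL.inter D' D'')

/-- Pointwise exhaustive normalization of the disjuncts of a full concept. -/
def RwL (K : Set PLAx) (C C' : PLC) : Prop :=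
  List.Forall₂ (Relation.ReflTransGen (Rw K)) C C'

/-- `PLR(K, C ⊑ D) = true` (Algorithm 2): normalize `C` exhaustively with the seven
    rules, split intervals w.r.t. `D`, and check every resulting disjunct against
    some disjunct of `D` with `STS`. -/
def PLRaccept (K : Set PLAx) (C D : PLC) : Prop :=
  ∃ C' : PLC, RwL K C C' ∧ (∀ c ∈ C', Normalized K c) ∧
    ∀ c ∈ splitL C' D, ∃ d ∈ D, STS K c d

/-! ### Signatures -/

def SPL.rNames : SPL → Set ℕ
  | .ex r c => insert r c.rNames
  | .inter c d => c.rNames ∪ d.rNames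
  | _ => ∅

def SPL.cNames : SPL → Set ℕ
  | .atom a => {a}
  | .ex _ c => c.cNames
  | .inter c d => c.cNames ∪ d.cNames
  | _ => ∅

def rNamesL (C : PLC) : Set ℕ := {n | ∃ c ∈ C, n ∈ SPL.rNames c}
def cNamesL (C : PLC) : Set ℕ := {n | ∃ c ∈ C, n ∈ SPL.cNames c}

def PLAx.rNames : PLAx → Set ℕ
  | .funcRole r => {r}
  | .rangeAx r _ => {r}
  | _ => ∅

def PLAx.cNames : PLAx → Set ℕ
  | .rangeAx _ a => {a}
  | .incl a b => {a, b}
  | .disj a b => {a, b}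
  | _ => ∅

def rNamesPL (K : Set PLAx) : Set ℕ := {n | ∃ ax ∈ K, n ∈ PLAx.rNames ax}
def cNamesPL (K : Set PLAx) : Set ℕ := {n | ∃ ax ∈ K, n ∈ PLAx.cNames ax}

/-! ### Horn-SRIQ oracles -/

/-- SRIQ roles: role names and their inverses. -/
inductive HRole : Type
  | name : ℕ → HRole
  | inv  : ℕ → HRole
  deriving DecidableEq

/-- The concepts allowed in normal-form Horn-SRIQ axioms:
    concept names, `⊤`, `⊥`, and `∃S.Self`. -/
inductive HAtom : Type
  | name : ℕ → HAtom
  | top  : HAtom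
  | bot  : HAtom
  | self : HRole → HAtom
  deriving DecidableEq

/-- Horn-SRIQ axioms in normal form (Table 2), plus role axioms. -/
inductive HAx : Type
  | sub2    : HAtom → HAtom → HAtom → HAx      -- C₁ ⊓ C₂ ⊑ D
  | subEx   : HRole → HAtom → HAtom → HAx      -- ∃R.C ⊑ D
  | subAll  : HAtom → HRole → HAtom → HAx      -- C ⊑ ∀R.D
  | subToEx : HAtom → HRole → HAtom → HAx      -- C ⊑ ∃R.D
  | atMost1 : HAtom → HRole → HAtom → HAx      -- C ⊑ ≤1 S.D
  | atLeast : HAtom → ℕ → HRole → HAtom → HAx  -- C ⊑ ≥n S.D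
  | rIncl   : List HRole → HRole → HAx         -- R₁ ∘ … ∘ Rₙ ⊑ R
  | rDisj   : HRole → HRole → HAx              -- disj(S₁, S₂)

def HRole.sem (I : Interp) : HRole → Set (I.Δ × I.Δ)
  | .name r => I.role r
  | .inv r => {p | (p.2, p.1) ∈ I.role r}

def HAtom.sem (I : Interp) : HAtom → Set I.Δ
  | .name a => I.conc a
  | .top => Set.univ
  | .bot => ∅
  | .self s => {d | (d, d) ∈ s.sem I}

def HRole.semChain (I : Interp) : List HRole → Set (I.Δ × I.Δ)
  | [] => {p | p.1 = p.2}
  | r :: rest => {p | ∃ z, (p.1, z) ∈ r.sem I ∧ (z, p.2) ∈ HRole.semChain I rest}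

def Interp.satHAx (I : Interp) : HAx → Prop
  | .sub2 c₁ c₂ d => c₁.sem I ∩ c₂.sem I ⊆ d.sem I
  | .subEx r c d => {x | ∃ y, (x, y) ∈ r.sem I ∧ y ∈ c.sem I} ⊆ d.sem I
  | .subAll c r d => ∀ ⦃x y⦄, x ∈ c.sem I → (x, y) ∈ r.sem I → y ∈ d.sem I
  | .subToEx c r d => ∀ ⦃x⦄, x ∈ c.sem I → ∃ y, (x, y) ∈ r.sem I ∧ y ∈ d.sem I
  | .atMost1 c s d => ∀ ⦃x y z⦄, x ∈ c.sem I → (x, y) ∈ s.sem I → y ∈ d.sem I →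
      (x, z) ∈ s.sem I → z ∈ d.sem I → y = z
  | .atLeast c n s d => ∀ ⦃x⦄, x ∈ c.sem I →
      ∃ t : Finset I.Δ, n ≤ t.card ∧ ∀ y ∈ t, (x, y) ∈ s.sem I ∧ y ∈ d.sem I
  | .rIncl rs r => HRole.semChain I rs ⊆ r.sem I
  | .rDisj s₁ s₂ => s₁.sem I ∩ s₂.sem I = ∅

def Interp.satHKB (I : Interp) (O : Set HAx) : Prop := ∀ ax ∈ O, I.satHAx ax

def HRole.base : HRole → ℕ
  | .name r => r
  | .inv r => r

def HAtom.cNames : HAtom → Set ℕ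
  | .name a => {a}
  | _ => ∅

def HAtom.rNames : HAtom → Set ℕ
  | .self s => {s.base}
  | _ => ∅

def HAx.cNames : HAx → Set ℕ
  | .sub2 c₁ c₂ d => c₁.cNames ∪ c₂.cNames ∪ d.cNames
  | .subEx _ c d => c.cNames ∪ d.cNames
  | .subAll c _ d => c.cNames ∪ d.cNames
  | .subToEx c _ d => c.cNames ∪ d.cNames
  | .atMost1 c _ d => c.cNames ∪ d.cNames
  | .atLeast c _ _ d => c.cNames ∪ d.cNames
  | .rIncl _ _ => ∅
  | .rDisj _ _ => ∅

def HAx.rNames : HAx → Set ℕ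
  | .sub2 c₁ c₂ d => c₁.rNames ∪ c₂.rNames ∪ d.rNames
  | .subEx r c d => insert r.base (c.rNames ∪ d.rNames)
  | .subAll c r d => insert r.base (c.rNames ∪ d.rNames)
  | .subToEx c r d => insert r.base (c.rNames ∪ d.rNames)
  | .atMost1 c s d => insert s.base (c.rNames ∪ d.rNames)
  | .atLeast c _ s d => insert s.base (c.rNames ∪ d.rNames)
  | .rIncl rs r => insert r.base {n | ∃ s ∈ rs, n = HRole.base s}
  | .rDisj s₁ s₂ => {s₁.base, s₂.base}

def rNamesH (O : Set HAx) : Set ℕ := {n | ∃ ax ∈ O, n ∈ HAx.rNames ax}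
def cNamesH (O : Set HAx) : Set ℕ := {n | ∃ ax ∈ O, n ∈ HAx.cNames ax}

/-! ### Axiom shifting, oracle queries, `pos(O_K⁺)` -/

/-- Range and functionality axioms. -/
def isRF : PLAx → Prop
  | .funcRole _ => True
  | .funcProp _ => True
  | .rangeAx _ _ => True
  | _ => False

/-- `K_O⁻`: the range and functionality axioms of `K`. -/
def Kminus (K : Set PLAx) : Set PLAx := {ax | ax ∈ K ∧ isRF ax}

/-- `K \ K_O⁻`: the inclusion and disjointness axioms of `K`, shifted to the oracle. -/
def Kshift (K : Set PLAx) : Set PLAx := {ax | ax ∈ K ∧ ¬ isRF ax}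

/-- Satisfaction of `O_K⁺ = O ∪ (K \ K_O⁻)`. -/
def satOplus (I : Interp) (K : Set PLAx) (O : Set HAx) : Prop :=
  I.satHKB O ∧ I.satKB (Kshift K)

/-- An oracle query `A₁ ⊓ … ⊓ A_m ⊑ A_{m+1} ⊔ … ⊔ Aₙ` (right-hand side `⊥` when empty). -/
structure OQuery : Type where
  lhs : List ℕ
  rhs : List ℕ

def Interp.satQ (I : Interp) (q : OQuery) : Prop :=
  {d | ∀ a ∈ q.lhs, d ∈ I.conc a} ⊆ {d | ∃ b ∈ q.rhs, d ∈ I.conc b}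

/-- The concept names of `sig(O_K⁺)`. -/
def cNamesOplus (K : Set PLAx) (O : Set HAx) : Set ℕ :=
  cNamesH O ∪ cNamesPL (Kshift K)

/-- `pos(O_K⁺)`: the oracle queries over `sig(O_K⁺) ∩ N_C` entailed by `O_K⁺`. -/
def posOplus (K : Set PLAx) (O : Set HAx) : Set OQuery :=
  {q | (∀ a ∈ q.lhs, a ∈ cNamesOplus K O) ∧ (∀ b ∈ q.rhs, b ∈ cNamesOplus K O) ∧
     ∀ I : Interp, satOplus I K O → I.satQ q}

/-- `K ∪ O ⊨ C ⊑ D`. -/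
def EntailsKO (K : Set PLAx) (O : Set HAx) (C D : PLC) : Prop :=
  ∀ I : Interp, I.satKB K → I.satHKB O → semL I C ⊆ semL I D

/-- `K_O⁻ ∪ pos(O_K⁺) ⊨ C ⊑ D`. -/
def EntailsShift (K : Set PLAx) (O : Set HAx) (C D : PLC) : Prop :=
  ∀ I : Interp, I.satKB (Kminus K) → (∀ q ∈ posOplus K O, I.satQ q) →
    semL I C ⊆ semL I D

/-- `O_K⁺ ⊨ A₁ ⊓ … ⊓ Aₙ ⊑ ⊥`. -/
def OplusRefutes (K : Set PLAx) (O : Set HAx) (as : List ℕ) : Prop :=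
  ∀ I : Interp, satOplus I K O → ∀ d : I.Δ, ¬ ∀ a ∈ as, d ∈ I.conc a

/-- One application of one of the seven oracle normalization rules (Table 4). -/
inductive RwO (K : Set PLAx) (O : Set HAx) : SPL → SPL → Prop
  /-- rule 1: `⊥ ⊓ D ⇝ ⊥` -/
  | botConj (C : SPL) :
      SPL.bot ∈ C.conj → C ≠ SPL.bot → RwO K O C SPL.bot
  /-- rule 2 -/
  | exBot (r : ℕ) : RwO K O (SPL.ex r SPL.bot) SPL.bot
  /-- rule 3 -/
  | emptyIval (f : ℕ) (l u : ℤ) : u < l → RwO K O (SPL.ival f l u) SPL.bot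
  /-- rule 4 -/
  | funcRole (C C' : SPL) (r : ℕ) (D D' : SPL) (rest : Multiset SPL) :
      PLAx.funcRole r ∈ Kminus K →
      C.conj = {SPL.ex r D, SPL.ex r D'} + rest →
      C'.conj = {SPL.ex r (SPL.inter D D')} + rest →
      RwO K O C C'
  /-- rule 5 (unconditional) -/
  | funcProp (C C' : SPL) (f : ℕ) (l₁ u₁ l₂ u₂ : ℤ) (rest : Multiset SPL) :
      C.conj = {SPL.ival f l₁ u₁, SPL.ival f l₂ u₂} + rest →
      C'.conj = {SPL.ival f (max l₁ l₂) (min u₁ u₂)} + rest →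
      RwO K O C C'
  /-- rule 6 -/
  | rangeRule (C C' : SPL) (r a : ℕ) (D : SPL) (rest : Multiset SPL) :
      PLAx.rangeAx r a ∈ Kminus K →
      SPL.atom a ∉ D.conj → SPL.bot ∉ D.conj →
      C.conj = {SPL.ex r D} + rest →
      C'.conj = {SPL.ex r (SPL.inter D (SPL.atom a))} + rest →
      RwO K O C C'
  /-- rule 7: `A₁ ⊓ … ⊓ Aₙ ⊓ D ⇝ ⊥` if `O_K⁺ ⊨ A₁ ⊓ … ⊓ Aₙ ⊑ ⊥` -/
  | atomsBot (C : SPL) (as : List ℕ) :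
      as ≠ [] → (∀ a ∈ as, SPL.atom a ∈ C.conj) → OplusRefutes K O as →
      RwO K O C SPL.bot
  /-- congruence: inside existential restrictions -/
  | exCongr (r : ℕ) (c c' : SPL) : RwO K O c c' → RwO K O (SPL.ex r c) (SPL.ex r c')
  /-- congruence: on one conjunct -/
  | interCongr (C C' c c' : SPL) (rest : Multiset SPL) :
      RwO K O c c' →
      C.conj = {c} + rest → C'.conj = {c'} + rest →
      RwO K O C C'

/-- `C` is normalized w.r.t. `K` and `O`. -/
def NormalizedO (K : Set PLAx) (O : Set HAx) (C : SPL) : Prop := ¬ ∃ C', RwO K O C C'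

/-! ### The canonical model of a normalized simple concept -/

/-- The top-level existential restrictions of a simple concept, in syntactic order. -/
def SPL.exList : SPL → List (ℕ × SPL)
  | .ex r c => [(r, c)]
  | .inter c d => c.exList ++ d.exList
  | _ => []

/-- The top-level concept names of a simple concept. -/
def SPL.atomList : SPL → List ℕ
  | .atom a => [a]
  | .inter c d => c.atomList ++ d.atomList
  | _ => []

/-- The top-level interval constraints of a simple concept. -/
def SPL.ivalList : SPL → List (ℕ × ℤ × ℤ)
  | .ival f l u => [(f, l, u)]
  | .inter c d => c.ivalList ++ d.ivalList
  | _ => []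

/-- The subconcept of `C` reached by following a path of indices into the
    nested top-level existential restrictions. -/
def subAt : List ℕ → SPL → Option SPL
  | [], C => some C
  | i :: p, C =>
    match C.exList[i]? with
    | some rc => subAt p rc.2
    | none => none

/-- The canonical model of a simple concept `C` w.r.t. `K` and `O` (Definition 18):
    its domain is the tree of nested existential restrictions of `C`. -/
def canonInterp (K : Set PLAx) (O : Set HAx) (C : SPL) : Interp where
  Δ := {p : List ℕ // (subAt p C).isSome}
  nonempty := ⟨⟨[], by simp [subAt]⟩⟩
  conc := fun a => {p | ∃ C', subAt p.1 C = some C' ∧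
    (OQuery.mk C'.atomList [a]) ∈ posOplus K O}
  role := fun r => {pq | ∃ (C' : SPL) (i : ℕ) (rc : ℕ × SPL),
    subAt pq.1.1 C = some C' ∧ C'.exList[i]? = some rc ∧ rc.1 = r ∧
    pq.2.1 = pq.1.1 ++ [i]}
  cprop := fun f => {pi | ∃ (C' : SPL) (l : ℤ),
    subAt pi.1.1 C = some C' ∧ (f, l, pi.2) ∈ C'.ivalList}

/-- The distinguished point `d` of the canonical model. -/
def canonRoot (K : Set PLAx) (O : Set HAx) (C : SPL) : (canonInterp K O C).Δ :=
  ⟨[], by simp [subAt]⟩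

/-! ### The oracle structural subsumption algorithm and `PLR^O` -/

/-- `STS^O` (Algorithm 3), with the oracle `O_K⁺`. -/
inductive STSO (K : Set PLAx) (O : Set HAx) : SPL → SPL → Prop
  | botCase (D : SPL) : STSO K O SPL.bot D
  | atomCase (C : SPL) (a : ℕ) :
      (OQuery.mk C.atomList [a]) ∈ posOplus K O → STSO K O C (SPL.atom a)
  | ivalCase (C : SPL) (f : ℕ) (l u l' u' : ℤ) :
      SPL.ival f l' u' ∈ C.conj → l ≤ l' → u' ≤ u → STSO K O C (SPL.ival f l u)
  | exCase (C C' D' : SPL) (r : ℕ) :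
      SPL.ex r C' ∈ C.conj → STSO K O C' D' → STSO K O C (SPL.ex r D')
  | interCase (C D' D'' : SPL) :
      STSO K O C D' → STSO K O C D'' → STSO K O C (SPL.inter D' D'')

def RwOL (K : Set PLAx) (O : Set HAx) (C C' : PLC) : Prop :=
  List.Forall₂ (Relation.ReflTransGen (RwO K O)) C C'

/-- `PLR^O(K, C ⊑ D) = true` (Algorithm 4). -/
def PLROaccept (K : Set PLAx) (O : Set HAx) (C D : PLC) : Prop :=
  ∃ C' : PLC, RwOL K O C C' ∧ (∀ c ∈ C', NormalizedO K O c) ∧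
    ∀ c ∈ splitL C' D, ∃ d ∈ D, STSO K O c d

/-! ### Single-atom form and oracle compilation -/

/-- Auxiliary predicate: every conjunct is a concept name, an interval constraint,
    or an existential restriction whose filler is in single-atom form. -/
def SAaux : SPL → Prop
  | .atom _ => True
  | .bot => False
  | .ival _ _ _ => True
  | .ex _ c => SAaux c ∧ c.atomList.length ≤ 1
  | .inter c d => SAaux c ∧ SAaux d

/-- A simple concept in single-atom form. -/
def SingleAtomS (C : SPL) : Prop := SAaux C ∧ C.atomList.length ≤ 1

/-- A full concept in single-atom form. -/
def SingleAtomL (C : PLC) : Prop := ∀ c ∈ C, SingleAtomS c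

/-- `comp(K, O) = K_O⁻ ∪ { A ⊑ B : (A ⊑ B) ∈ pos(O_K⁺) }`. -/
def compKB (K : Set PLAx) (O : Set HAx) : Set PLAx :=
  Kminus K ∪ {ax | ∃ a b : ℕ, ax = PLAx.incl a b ∧ (OQuery.mk [a] [b]) ∈ posOplus K O}

/-- A definition `B ≡ A₁ ⊓ … ⊓ Aₙ` (expressible in both EL and DL-lite_horn). -/
abbrev CDef := ℕ × List ℕ

def Interp.satDef (I : Interp) (df : CDef) : Prop :=
  I.conc df.1 = {d | ∀ a ∈ df.2, d ∈ I.conc a}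

/-- `K ∪ O ∪ O* ⊨ C ⊑ D`, where `O*` is a list of definitions. -/
def EntailsKODefs (K : Set PLAx) (O : Set HAx) (defs : List CDef) (C D : PLC) : Prop :=
  ∀ I : Interp, I.satKB K → I.satHKB O → (∀ df ∈ defs, I.satDef df) →
    semL I C ⊆ semL I D

def defsSize (defs : List CDef) : ℕ := (defs.map fun p => p.2.length + 1).sum

end PLPaper

namespace PLPaper

/-!
For a normalized disjunct `c`, take its canonical model: the tree of nested existential
restrictions of `c`, in which a node belongs to a concept name when `pos(O_K⁺)` derives that name
from the names of the node. Normalization makes it a model of `K_O⁻` (rules 4–6) in which every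
node satisfies its own concept (rules 1–3); rule 7 and the Horn character of `O_K⁺` (its models
are closed under products) make it a model of `pos(O_K⁺)`. Hence its root lies in some disjunct
`d`, and by interval safety this membership transfers to every instance of `c` in every model of
`K_O⁻ ∪ pos(O_K⁺)`, i.e. `c ⊑ d` is entailed. The cases `c = ⊥` and `O_K⁺` unsatisfiable are
trivial.
-/

namespace SPL

lemma conj_ne_zero (C : SPL) : C.conj ≠ 0 := by
  induction C with
  | inter a b iha _ => simp [conj, iha]
  | _ => simp [conj]

lemma ne_inter_of_mem_conj {C x : SPL} (hx : x ∈ C.conj) (a b : SPL) : x ≠ inter a b := by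
  induction C with
  | inter c d ihc ihd =>
    rcases Multiset.mem_add.1 hx with h | h
    · exact ihc h
    · exact ihd h
  | _ => simp_all [conj]

lemma conj_eq_singleton {C : SPL} (h : ∀ a b, C ≠ inter a b) : C.conj = {C} := by
  cases C with
  | inter a b => exact absurd rfl (h a b)
  | _ => rfl

lemma exists_conj_eq (M : Multiset SPL) (h0 : M ≠ 0) (hM : ∀ x ∈ M, ∀ a b, x ≠ inter a b) :
    ∃ C : SPL, C.conj = M := by
  induction M using Multiset.induction with
  | empty => exact absurd rfl h0
  | cons y M ih =>
    by_cases hM0 : M = 0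
    · exact ⟨y, by rw [conj_eq_singleton (hM y (Multiset.mem_cons_self y M)), hM0]; rfl⟩
    · obtain ⟨C, hC⟩ := ih hM0 fun x hx => hM x (Multiset.mem_cons_of_mem hx)
      refine ⟨inter y C, ?_⟩
      rw [conj, hC, conj_eq_singleton (hM y (Multiset.mem_cons_self y M)),
        Multiset.singleton_add]

lemma exists_conj_eq_add_sub (C : SPL) {M M' : Multiset SPL} (hM' : M' ≠ 0)
    (hni : ∀ x ∈ M', ∀ a b, x ≠ inter a b) : ∃ C' : SPL, C'.conj = M' + (C.conj - M) := by
  refine exists_conj_eq _ (by simp [hM']) fun x hx => ?_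
  rcases Multiset.mem_add.1 hx with hx | hx
  · exact hni x hx
  · exact ne_inter_of_mem_conj (Multiset.mem_of_le (Multiset.sub_le_self _ _) hx)

lemma atom_mem_conj {C : SPL} {a : ℕ} : atom a ∈ C.conj ↔ a ∈ C.atomList := by
  induction C with
  | inter c d ihc ihd => simp [conj, atomList, ihc, ihd]
  | _ => simp [conj, atomList]

lemma ival_mem_conj {C : SPL} {f : ℕ} {l u : ℤ} : ival f l u ∈ C.conj ↔ (f, l, u) ∈ C.ivalList := by
  induction C with
  | inter c d ihc ihd => simp [conj, ivalList, ihc, ihd]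
  | _ => simp [conj, ivalList]

lemma ex_mem_conj {C D : SPL} {r : ℕ} : ex r D ∈ C.conj ↔ (r, D) ∈ C.exList := by
  induction C with
  | inter c d ihc ihd => simp [conj, exList, ihc, ihd]
  | _ => simp [conj, exList]

lemma mem_sem_iff_forall_mem_conj {C : SPL} {I : Interp} {d : I.Δ} :
    d ∈ C.sem I ↔ ∀ x ∈ C.conj, d ∈ x.sem I := by
  induction C with
  | inter c c' ihc ihc' =>
    simp only [sem, Set.mem_inter_iff, conj, Multiset.mem_add, ihc, ihc', or_imp, forall_and]
  | _ => simp [conj]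

lemma ex_mem_conj_of_getElem? {C D : SPL} {r i : ℕ} (h : C.exList[i]? = some (r, D)) :
    ex r D ∈ C.conj :=
  ex_mem_conj.2 (List.mem_of_getElem? h)

lemma ivalList_subset_ivalsOf (C : SPL) : C.ivalList ⊆ C.ivalsOf := by
  induction C with
  | inter c d ihc ihd =>
    intro t ht
    simp only [ivalList, ivalsOf, List.mem_append] at ht ⊢
    exact ht.imp (ihc ·) (ihd ·)
  | _ => simp [ivalList, ivalsOf]

lemma ivalsOf_subset_of_mem_exList {C D : SPL} {r : ℕ} (h : (r, D) ∈ C.exList) :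
    D.ivalsOf ⊆ C.ivalsOf := by
  induction C with
  | inter c d ihc ihd =>
    rcases List.mem_append.1 h with h | h
    · exact List.Subset.trans (ihc h) (List.subset_append_left _ _)
    · exact List.Subset.trans (ihd h) (List.subset_append_right _ _)
  | ex r' c => simp_all [exList, ivalsOf]
  | _ => simp [exList] at h

end SPL

lemma pair_le_coe_of_getElem? {α : Type*} {l : List α} {i j : ℕ} {a b : α} (hij : i ≠ j)
    (ha : l[i]? = some a) (hb : l[j]? = some b) : ({a, b} : Multiset α) ≤ l := by
  obtain ⟨hi, rfl⟩ := List.getElem?_eq_some_iff.1 ha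
  rw [← Multiset.coe_eq_coe.2 (List.getElem_cons_eraseIdx_perm hi), ← Multiset.cons_coe]
  exact Multiset.cons_le_cons _
    (Multiset.singleton_le.2 (List.mem_eraseIdx_iff_getElem?.2 ⟨j, hij.symm, hb⟩))

lemma exList_map_ex_le_conj (C : SPL) :
    ((C.exList.map fun rD => SPL.ex rD.1 rD.2 : List SPL) : Multiset SPL) ≤ C.conj := by
  induction C with
  | inter a b iha ihb =>
    rw [SPL.exList, List.map_append, ← Multiset.coe_add]
    exact add_le_add iha ihb
  | _ => simp [SPL.conj, SPL.exList]

lemma subAt_append : ∀ (p : List ℕ) {C C' : SPL}, subAt p C = some C' →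
    ∀ q : List ℕ, subAt (p ++ q) C = subAt q C'
  | [], _, _, h, _ => by cases h; rfl
  | i :: p, C, _, h, q => by
    cases hi : C.exList[i]? with
    | none => simp [subAt, hi] at h
    | some rD =>
      simp only [subAt, hi, List.cons_append] at h ⊢
      exact subAt_append p h q

lemma subAt_append_singleton {p : List ℕ} {C C' D : SPL} {r i : ℕ}
    (h : subAt p C = some C') (hi : C'.exList[i]? = some (r, D)) :
    subAt (p ++ [i]) C = some D := by
  simp [subAt_append p h, subAt, hi]

namespace NormalizedO

variable {K : Set PLAx} {O : Set HAx} {C : SPL}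

lemma not_rwO_of_mem_conj (hC : NormalizedO K O C) {x x' : SPL} (hx : x ∈ C.conj)
    (hrw : RwO K O x x') (hx' : ∀ a b, x' ≠ SPL.inter a b) : False := by
  obtain ⟨C', hC'⟩ := C.exists_conj_eq_add_sub (M := {x}) (M' := {x'}) (by simp) (by simpa)
  exact hC ⟨C', .interCongr C C' x x' _ hrw
    (add_tsub_cancel_of_le (Multiset.singleton_le.2 hx)).symm hC'⟩

lemma of_ex_mem_conj (hC : NormalizedO K O C) {r : ℕ} {D : SPL} (hD : SPL.ex r D ∈ C.conj) :
    NormalizedO K O D :=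
  fun ⟨D', hD'⟩ => hC.not_rwO_of_mem_conj hD (.exCongr r D D' hD') (by simp)

lemma subAt (hC : NormalizedO K O C) {p : List ℕ} {C' : SPL}
    (h : PLPaper.subAt p C = some C') : NormalizedO K O C' := by
  induction p generalizing C with
  | nil => cases h; exact hC
  | cons i p ih =>
    cases hi : C.exList[i]? with
    | none => simp [PLPaper.subAt, hi] at h
    | some rD =>
      simp only [PLPaper.subAt, hi] at h
      exact ih (hC.of_ex_mem_conj (SPL.ex_mem_conj_of_getElem? hi)) h

lemma bot_notMem_conj (hC : NormalizedO K O C) (hne : C ≠ SPL.bot) : SPL.bot ∉ C.conj :=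
  fun h => hC ⟨_, .botConj C h hne⟩

lemma ne_bot_of_ex_mem_conj (hC : NormalizedO K O C) {r : ℕ} {D : SPL}
    (hD : SPL.ex r D ∈ C.conj) : D ≠ SPL.bot := by
  rintro rfl
  exact hC.not_rwO_of_mem_conj hD (.exBot r) (by simp)

lemma le_of_ival_mem_conj (hC : NormalizedO K O C) {f : ℕ} {l u : ℤ}
    (h : SPL.ival f l u ∈ C.conj) : l ≤ u := by
  by_contra hlu
  exact hC.not_rwO_of_mem_conj h (.emptyIval f l u (not_le.1 hlu)) (by simp)

lemma not_oplusRefutes (hC : NormalizedO K O C) (h : C.atomList ≠ []) :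
    ¬ OplusRefutes K O C.atomList :=
  fun href => hC ⟨_, .atomsBot C _ h (fun _ ha => SPL.atom_mem_conj.2 ha) href⟩

lemma eq_of_exList_getElem? (hC : NormalizedO K O C) {r i j : ℕ} {D D' : SPL}
    (hr : PLAx.funcRole r ∈ Kminus K)
    (hi : C.exList[i]? = some (r, D)) (hj : C.exList[j]? = some (r, D')) : i = j := by
  by_contra hij
  have hle : ({SPL.ex r D, SPL.ex r D'} : Multiset SPL) ≤ C.conj :=
    (pair_le_coe_of_getElem? hij (by simp [hi]) (by simp [hj])).trans (exList_map_ex_le_conj C)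
  obtain ⟨C', hC'⟩ := C.exists_conj_eq_add_sub (M' := {SPL.ex r (D.inter D')}) (by simp) (by simp)
  exact hC ⟨C', .funcRole C C' r D D' _ hr (add_tsub_cancel_of_le hle).symm hC'⟩

lemma eq_of_mem_ivalList (hC : NormalizedO K O C) {f : ℕ} {l₁ u₁ l₂ u₂ : ℤ}
    (h₁ : (f, l₁, u₁) ∈ C.ivalList) (h₂ : (f, l₂, u₂) ∈ C.ivalList) : l₁ = l₂ ∧ u₁ = u₂ := by
  by_contra hne
  have hle : ({SPL.ival f l₁ u₁, SPL.ival f l₂ u₂} : Multiset SPL) ≤ C.conj :=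
    (Multiset.le_iff_subset (by simpa using hne)).2 <| by
      simp [Multiset.insert_eq_cons, Multiset.cons_subset, SPL.ival_mem_conj.2 h₁, SPL.ival_mem_conj.2 h₂]
  obtain ⟨C', hC'⟩ := C.exists_conj_eq_add_sub
    (M' := {SPL.ival f (max l₁ l₂) (min u₁ u₂)}) (by simp) (by simp)
  exact hC ⟨C', .funcProp C C' f l₁ u₁ l₂ u₂ _ (add_tsub_cancel_of_le hle).symm hC'⟩

lemma atom_mem_of_rangeAx (hC : NormalizedO K O C) {r a : ℕ} {D : SPL}
    (hr : PLAx.rangeAx r a ∈ Kminus K) (hD : SPL.ex r D ∈ C.conj) : a ∈ D.atomList := by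
  by_contra ha
  have hbot : SPL.bot ∉ D.conj :=
    (hC.of_ex_mem_conj hD).bot_notMem_conj (hC.ne_bot_of_ex_mem_conj hD)
  have hle : ({SPL.ex r D} : Multiset SPL) ≤ C.conj := Multiset.singleton_le.2 hD
  obtain ⟨C', hC'⟩ := C.exists_conj_eq_add_sub
    (M' := {SPL.ex r (D.inter (SPL.atom a))}) (by simp) (by simp)
  exact hC ⟨C', .rangeRule C C' r a D _ hr (mt SPL.atom_mem_conj.1 ha) hbot
    (add_tsub_cancel_of_le hle).symm hC'⟩

end NormalizedO

def Interp.prod (I J : Interp) : Interp where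
  Δ := I.Δ × J.Δ
  nonempty := let ⟨x⟩ := I.nonempty; let ⟨y⟩ := J.nonempty; ⟨(x, y)⟩
  conc a := {x | x.1 ∈ I.conc a ∧ x.2 ∈ J.conc a}
  role r := {xy | (xy.1.1, xy.2.1) ∈ I.role r ∧ (xy.1.2, xy.2.2) ∈ J.role r}
  cprop f := {xi | (xi.1.1, xi.2) ∈ I.cprop f ∧ (xi.1.2, xi.2) ∈ J.cprop f}

namespace Interp

variable {I J : Interp}

lemma mem_hRole_sem_prod (s : HRole) (x y : (I.prod J).Δ) :
    (x, y) ∈ s.sem (I.prod J) ↔ (x.1, y.1) ∈ s.sem I ∧ (x.2, y.2) ∈ s.sem J := by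
  cases s <;> rfl

lemma mem_hAtom_sem_prod (c : HAtom) (x : (I.prod J).Δ) :
    x ∈ c.sem (I.prod J) ↔ x.1 ∈ c.sem I ∧ x.2 ∈ c.sem J := by
  cases c with
  | name a => exact Iff.rfl
  | self s => exact mem_hRole_sem_prod s x x
  | top | bot => simp [HAtom.sem]

lemma semChain_prod (rs : List HRole) {x y : (I.prod J).Δ}
    (h : (x, y) ∈ HRole.semChain (I.prod J) rs) :
    (x.1, y.1) ∈ HRole.semChain I rs ∧ (x.2, y.2) ∈ HRole.semChain J rs := by
  induction rs generalizing x with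
  | nil => cases h; exact ⟨rfl, rfl⟩
  | cons r rs ih =>
    obtain ⟨z, hxz, hzy⟩ := h
    obtain ⟨h₁, h₂⟩ := (mem_hRole_sem_prod r x z).1 hxz
    obtain ⟨h₃, h₄⟩ := ih hzy
    exact ⟨⟨z.1, h₁, h₃⟩, ⟨z.2, h₂, h₄⟩⟩

lemma satHAx_prod {ax : HAx} (hI : I.satHAx ax) (hJ : J.satHAx ax) : (I.prod J).satHAx ax := by
  cases ax with
  | sub2 c₁ c₂ d =>
    rintro x ⟨h₁, h₂⟩
    rw [mem_hAtom_sem_prod] at h₁ h₂ ⊢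
    exact ⟨hI ⟨h₁.1, h₂.1⟩, hJ ⟨h₁.2, h₂.2⟩⟩
  | subEx r c d =>
    rintro x ⟨y, hxy, hy⟩
    rw [mem_hRole_sem_prod] at hxy
    rw [mem_hAtom_sem_prod] at hy ⊢
    exact ⟨hI ⟨y.1, hxy.1, hy.1⟩, hJ ⟨y.2, hxy.2, hy.2⟩⟩
  | subAll c r d =>
    intro x y hx hxy
    rw [mem_hAtom_sem_prod] at hx ⊢
    rw [mem_hRole_sem_prod] at hxy
    exact ⟨hI hx.1 hxy.1, hJ hx.2 hxy.2⟩
  | subToEx c r d =>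
    intro x hx
    rw [mem_hAtom_sem_prod] at hx
    obtain ⟨y₁, h₁, h₂⟩ := hI hx.1
    obtain ⟨y₂, h₃, h₄⟩ := hJ hx.2
    exact ⟨(y₁, y₂), (mem_hRole_sem_prod r x (y₁, y₂)).2 ⟨h₁, h₃⟩,
      (mem_hAtom_sem_prod d (y₁, y₂)).2 ⟨h₂, h₄⟩⟩
  | atMost1 c s d =>
    intro x y z hx hxy hy hxz hz
    rw [mem_hAtom_sem_prod] at hx hy hz
    rw [mem_hRole_sem_prod] at hxy hxz
    exact Prod.ext (hI hx.1 hxy.1 hy.1 hxz.1 hz.1) (hJ hx.2 hxy.2 hy.2 hxz.2 hz.2)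
  | atLeast c n s d =>
    intro x hx
    rw [mem_hAtom_sem_prod] at hx
    obtain ⟨t₁, hn₁, ht₁⟩ := hI hx.1
    obtain ⟨t₂, hn₂, ht₂⟩ := hJ hx.2
    refine ⟨t₁ ×ˢ t₂, ?_, fun y hy => ?_⟩
    · show n ≤ (t₁ ×ˢ t₂ : Finset (I.Δ × J.Δ)).card
      rw [Finset.card_product]
      rcases Nat.eq_zero_or_pos n with rfl | hn
      · exact Nat.zero_le _
      · exact hn₁.trans (Nat.le_mul_of_pos_right _ (hn.trans_le hn₂))
    · obtain ⟨hy₁, hy₂⟩ := Finset.mem_product.1 hy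
      exact ⟨(mem_hRole_sem_prod s x y).2 ⟨(ht₁ _ hy₁).1, (ht₂ _ hy₂).1⟩,
        (mem_hAtom_sem_prod d y).2 ⟨(ht₁ _ hy₁).2, (ht₂ _ hy₂).2⟩⟩
  | rIncl rs r =>
    intro xy hxy
    obtain ⟨h₁, h₂⟩ := semChain_prod rs hxy
    exact (mem_hRole_sem_prod r xy.1 xy.2).2 ⟨hI h₁, hJ h₂⟩
  | rDisj s₁ s₂ =>
    refine Set.eq_empty_of_forall_notMem fun xy ⟨h₁, h₂⟩ => ?_
    rw [mem_hRole_sem_prod] at h₁ h₂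
    exact (Set.eq_empty_iff_forall_notMem.1 hI) _ ⟨h₁.1, h₂.1⟩

end Interp

section Horn

variable {K : Set PLAx} {O : Set HAx}

lemma satOplus_prod {I J : Interp} (hI : satOplus I K O) (hJ : satOplus J K O) :
    satOplus (I.prod J) K O := by
  refine ⟨fun ax hax => Interp.satHAx_prod (hI.1 ax hax) (hJ.1 ax hax), fun ax hax => ?_⟩
  have hIax := hI.2 ax hax
  have hJax := hJ.2 ax hax
  cases ax with
  | incl a b => exact fun x hx => ⟨hIax hx.1, hJax hx.2⟩
  | disj a b =>
    exact Set.eq_empty_of_forall_notMem fun x hx =>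
      (Set.eq_empty_iff_forall_notMem.1 hIax) x.1 ⟨hx.1.1, hx.2.1⟩
  | _ => exact absurd trivial hax.2

/-- Multiply together one counter-model for each element of `B`. -/
lemma exists_satOplus_avoiding {A B : List ℕ}
    (hA : ∃ I : Interp, satOplus I K O ∧ ∃ x : I.Δ, ∀ a ∈ A, x ∈ I.conc a)
    (hB : ∀ b ∈ B, ∃ I : Interp, satOplus I K O ∧
      ∃ x : I.Δ, (∀ a ∈ A, x ∈ I.conc a) ∧ x ∉ I.conc b) :
    ∃ I : Interp, satOplus I K O ∧
      ∃ x : I.Δ, (∀ a ∈ A, x ∈ I.conc a) ∧ ∀ b ∈ B, x ∉ I.conc b := by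
  induction B with
  | nil =>
    obtain ⟨I, hI, x, hx⟩ := hA
    exact ⟨I, hI, x, hx, by simp⟩
  | cons b B ih =>
    obtain ⟨I, hI, x, hx, hxB⟩ := ih fun b' hb' => hB b' (List.mem_cons_of_mem b hb')
    obtain ⟨J, hJ, y, hy, hyb⟩ := hB b List.mem_cons_self
    refine ⟨J.prod I, satOplus_prod hJ hI, (y, x), fun a ha => ⟨hy a ha, hx a ha⟩, ?_⟩
    rintro b' (_ | ⟨_, hb'⟩) hmem
    · exact hyb hmem.1
    · exact hxB b' hb' hmem.2

lemma exists_satQ_singleton {A B : List ℕ}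
    (hA : ∃ I : Interp, satOplus I K O ∧ ∃ x : I.Δ, ∀ a ∈ A, x ∈ I.conc a)
    (hAB : ∀ I : Interp, satOplus I K O → I.satQ ⟨A, B⟩) :
    ∃ b ∈ B, ∀ I : Interp, satOplus I K O → I.satQ ⟨A, [b]⟩ := by
  by_contra! hB
  obtain ⟨I, hI, x, hx, hxB⟩ := exists_satOplus_avoiding hA fun b hb => by
    obtain ⟨I, hI, hIb⟩ := hB b hb
    obtain ⟨x, hx, hxb⟩ := Set.not_subset.1 hIb
    exact ⟨I, hI, x, hx, fun h => hxb ⟨b, List.mem_singleton_self b, h⟩⟩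
  obtain ⟨b, hb, hxb⟩ := hAB I hI hx
  exact hxB b hb hxb

end Horn

open Classical in
noncomputable def sigAtoms (K : Set PLAx) (O : Set HAx) (C : SPL) : List ℕ :=
  C.atomList.filter (· ∈ cNamesOplus K O)

lemma mem_sigAtoms {K : Set PLAx} {O : Set HAx} {C : SPL} {b : ℕ} :
    b ∈ sigAtoms K O C ↔ b ∈ C.atomList ∧ b ∈ cNamesOplus K O := by
  simp [sigAtoms]

/-- Points are the nodes of the tree of nested existential restrictions of `C₀`, addressed by
paths of indices into `exList`. Unlike in `canonInterp`, a node also belongs to its own concept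
names, since `pos(O_K⁺)` says nothing about names outside `sig(O_K⁺)`. -/
noncomputable def canonModel (K : Set PLAx) (O : Set HAx) (C₀ : SPL) : Interp where
  Δ := {p : List ℕ // (subAt p C₀).isSome}
  nonempty := ⟨⟨[], rfl⟩⟩
  conc a := {p | ∃ C, subAt p.1 C₀ = some C ∧
    (a ∈ C.atomList ∨ ⟨sigAtoms K O C, [a]⟩ ∈ posOplus K O)}
  role r := {pq | ∃ C i D, subAt pq.1.1 C₀ = some C ∧ C.exList[i]? = some (r, D) ∧
    pq.2.1 = pq.1.1 ++ [i]}
  cprop f := {pv | ∃ C l, subAt pv.1.1 C₀ = some C ∧ (f, l, pv.2) ∈ C.ivalList}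

namespace canonModel

variable {K : Set PLAx} {O : Set HAx} {C₀ : SPL}

def root : (canonModel K O C₀).Δ := ⟨[], rfl⟩

lemma satKB_kminus (hn : NormalizedO K O C₀) : (canonModel K O C₀).satKB (Kminus K) := by
  intro ax hax
  cases ax with
  | funcRole r =>
    rintro p q q' ⟨C, i, D, hC, hi, hq⟩ ⟨C', j, D', hC', hj, hq'⟩
    rw [hC] at hC'
    cases hC'
    have hij := (hn.subAt hC).eq_of_exList_getElem? hax hi hj
    exact Subtype.ext (by rw [hq, hq', hij])
  | funcProp f =>
    rintro p v w ⟨C, l, hC, hv⟩ ⟨C', l', hC', hw⟩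
    rw [hC] at hC'
    cases hC'
    exact ((hn.subAt hC).eq_of_mem_ivalList hv hw).2
  | rangeAx r a =>
    rintro p q ⟨C, i, D, hC, hi, hq⟩
    refine ⟨D, by rw [hq, subAt_append_singleton hC hi], Or.inl ?_⟩
    exact (hn.subAt hC).atom_mem_of_rangeAx hax (SPL.ex_mem_conj_of_getElem? hi)
  | _ => exact absurd hax.2 id

lemma satQ_posOplus (hn : NormalizedO K O C₀) (hsat : ∃ I : Interp, satOplus I K O) :
    ∀ q ∈ posOplus K O, (canonModel K O C₀).satQ q := by
  rintro ⟨lhs, rhs⟩ ⟨hlhs, hrhs, hq⟩ p hp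
  obtain ⟨C, hC⟩ := Option.isSome_iff_exists.1 p.2
  have hCq : ∀ I : Interp, satOplus I K O → I.satQ ⟨sigAtoms K O C, rhs⟩ := by
    refine fun I hI x hx => hq I hI fun a ha => ?_
    obtain ⟨C', hC', ha'⟩ := hp a ha
    rw [hC] at hC'
    cases hC'
    rcases ha' with ha' | ha'
    · exact hx a (mem_sigAtoms.2 ⟨ha', hlhs a ha⟩)
    · simpa using ha'.2.2 I hI hx
  have hCsat : ∃ I : Interp, satOplus I K O ∧ ∃ x : I.Δ, ∀ a ∈ sigAtoms K O C, x ∈ I.conc a := by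
    by_cases hA : C.atomList = []
    · obtain ⟨I, hI⟩ := hsat
      exact ⟨I, hI, Classical.choice I.nonempty, by simp [mem_sigAtoms, hA]⟩
    · have := (hn.subAt hC).not_oplusRefutes hA
      rw [OplusRefutes] at this
      push Not at this
      obtain ⟨I, hI, x, hx⟩ := this
      exact ⟨I, hI, x, fun a ha => hx a (mem_sigAtoms.1 ha).1⟩
  obtain ⟨b, hb, hbq⟩ := exists_satQ_singleton hCsat hCq
  refine ⟨b, hb, C, hC, Or.inr ⟨fun a ha => (mem_sigAtoms.1 ha).2, ?_, hbq⟩⟩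
  simpa using hrhs b hb

lemma mem_sem_of_subAt (hn : NormalizedO K O C₀) {p : (canonModel K O C₀).Δ} {C : SPL}
    (hC : subAt p.1 C₀ = some C) (hbot : C ≠ SPL.bot) {x : SPL} (hx : ∀ y ∈ x.conj, y ∈ C.conj) :
    p ∈ x.sem (canonModel K O C₀) := by
  have hnC := hn.subAt hC
  induction x generalizing p C with
  | atom a => exact ⟨C, hC, Or.inl (SPL.atom_mem_conj.1 (hx _ (by simp [SPL.conj])))⟩
  | bot => exact absurd (hx _ (by simp [SPL.conj])) (hnC.bot_notMem_conj hbot)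
  | ival f l u =>
    have hmem := hx (.ival f l u) (by simp [SPL.conj])
    exact ⟨u, hnC.le_of_ival_mem_conj hmem, le_rfl, C, l, hC, SPL.ival_mem_conj.1 hmem⟩
  | ex r D ih =>
    have hmem := hx (.ex r D) (by simp [SPL.conj])
    obtain ⟨i, hi⟩ := List.mem_iff_getElem?.1 (SPL.ex_mem_conj.1 hmem)
    have hD := subAt_append_singleton hC hi
    exact ⟨⟨p.1 ++ [i], by rw [hD]; rfl⟩, ⟨C, i, D, hC, hi, rfl⟩,
      ih hD (hnC.ne_bot_of_ex_mem_conj hmem) (fun _ => id) (hnC.of_ex_mem_conj hmem)⟩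
  | inter a b iha ihb =>
    exact ⟨iha hC hbot (fun y hy => hx y (Multiset.mem_add.2 (Or.inl hy))) hnC,
      ihb hC hbot (fun y hy => hx y (Multiset.mem_add.2 (Or.inr hy))) hnC⟩

end canonModel

lemma IntervalSafe.mono {C C' D D' : PLC} (h : IntervalSafe C D) (hC : ivalsL C' ⊆ ivalsL C)
    (hD : ivalsL D' ⊆ ivalsL D) : IntervalSafe C' D' :=
  fun p hp q hq => h p (hC hp) q (hD hq)

lemma IntervalSafe.singleton {Cs Ds : PLC} (h : IntervalSafe Cs Ds) {c d : SPL} (hc : c ∈ Cs)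
    (hd : d ∈ Ds) : IntervalSafe [c] [d] :=
  h.mono (fun _ ht => List.mem_flatMap.2 ⟨c, hc, by simpa [ivalsL] using ht⟩)
    (fun _ ht => List.mem_flatMap.2 ⟨d, hd, by simpa [ivalsL] using ht⟩)

section

variable {K : Set PLAx} {O : Set HAx}

/-- Interval safety is what makes the value chosen for an interval of a node (its upper bound) a
faithful representative of the whole interval. -/
lemma mem_sem_of_mem_canonModel_sem {C₀ : SPL} (I : Interp)
    (hI : ∀ q ∈ posOplus K O, I.satQ q) (e : SPL) {p : (canonModel K O C₀).Δ} {C : SPL}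
    (hC : subAt p.1 C₀ = some C) (hS : IntervalSafe [C] [e]) {y : I.Δ} (hy : y ∈ C.sem I)
    (hp : p ∈ e.sem (canonModel K O C₀)) : y ∈ e.sem I := by
  have hyC := SPL.mem_sem_iff_forall_mem_conj.1 hy
  induction e generalizing p C y with
  | atom a =>
    obtain ⟨C', hC', ha⟩ := hp
    rw [hC] at hC'
    cases hC'
    rcases ha with ha | ha
    · exact hyC _ (SPL.atom_mem_conj.2 ha)
    · simpa [SPL.sem] using hI _ ha fun b hb => hyC _ (SPL.atom_mem_conj.2 (mem_sigAtoms.1 hb).1)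
  | bot => exact hp.elim
  | ival f l u =>
    obtain ⟨v, hlv, hvu, C', l₀, hC', hv⟩ := hp
    rw [hC] at hC'
    cases hC'
    obtain ⟨w, hl₀w, hwv, hyw⟩ := hyC _ (SPL.ival_mem_conj.2 hv)
    have hsafe := hS (f, l₀, v) (by simpa [ivalsL] using C.ivalList_subset_ivalsOf hv)
      (f, l, u) (by simp [ivalsL, SPL.ivalsOf])
    have hsub : Set.Icc l₀ v ⊆ Set.Icc l u := hsafe.resolve_right
      (Set.nonempty_iff_ne_empty.1 ⟨v, ⟨hl₀w.trans hwv, le_rfl⟩, hlv, hvu⟩)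
    exact ⟨w, (hsub ⟨hl₀w, hwv⟩).1, (hsub ⟨hl₀w, hwv⟩).2, hyw⟩
  | ex r e ih =>
    obtain ⟨q, ⟨C', i, D, hC', hi, hq⟩, hqe⟩ := hp
    rw [hC] at hC'
    cases hC'
    obtain ⟨z, hyz, hz⟩ := hyC _ (SPL.ex_mem_conj_of_getElem? hi)
    have hD : subAt q.1 C₀ = some D := by rw [hq, subAt_append_singleton hC hi]
    have hSD : IntervalSafe [D] [e] := hS.mono
      (by simpa [ivalsL] using C.ivalsOf_subset_of_mem_exList (List.mem_of_getElem? hi))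
      (by simp [ivalsL, SPL.ivalsOf])
    exact ⟨z, hyz, ih hD hSD hz hqe (SPL.mem_sem_iff_forall_mem_conj.1 hz)⟩
  | inter a b iha ihb =>
    exact ⟨iha hC (hS.mono (List.Subset.refl _) (by simp [ivalsL, SPL.ivalsOf])) hy hp.1 hyC,
      ihb hC (hS.mono (List.Subset.refl _) (by simp [ivalsL, SPL.ivalsOf])) hy hp.2 hyC⟩

lemma entailsShift_of_root_mem_canonModel {c d : SPL} (hS : IntervalSafe [c] [d])
    (h : canonModel.root ∈ d.sem (canonModel K O c)) :
    EntailsShift K O [c] [d] := by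
  rintro I - hI y ⟨c', hc', hy⟩
  rw [List.mem_singleton] at hc'
  subst hc'
  exact ⟨d, List.mem_singleton_self d, mem_sem_of_mem_canonModel_sem I hI d rfl hS hy h⟩

/-- Without a model of `O_K⁺`, the query `⊤ ⊑ ⊥` lies in `pos(O_K⁺)`. -/
lemma entailsShift_of_not_satOplus (h : ¬ ∃ I : Interp, satOplus I K O) (C D : PLC) :
    EntailsShift K O C D := by
  intro I _ hI
  obtain ⟨x⟩ := I.nonempty
  have hx := hI ⟨[], []⟩ ⟨by simp, by simp, fun J hJ => absurd ⟨J, hJ⟩ h⟩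
    (show x ∈ {x : I.Δ | ∀ a ∈ ([] : List ℕ), x ∈ I.conc a} by simp)
  simp at hx

lemma entailsShift_bot (D : PLC) : EntailsShift K O [SPL.bot] D := by
  rintro I - - y ⟨c, hc, hy⟩
  rw [List.mem_singleton] at hc
  subst hc
  exact hy.elim

lemma entailsShift_of_forall_exists {Cs Ds : PLC}
    (h : ∀ c ∈ Cs, ∃ d ∈ Ds, EntailsShift K O [c] [d]) : EntailsShift K O Cs Ds := by
  rintro I hK hI y ⟨c, hc, hy⟩
  obtain ⟨d, hd, hcd⟩ := h c hc
  obtain ⟨d', hd', hyd⟩ := hcd I hK hI ⟨c, List.mem_singleton_self c, hy⟩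
  rw [List.mem_singleton] at hd'
  exact ⟨d, hd, hd' ▸ hyd⟩

end

theorem statement_11_general (K : Set PLAx) (O : Set HAx) (Cs Ds : PLC)
    (hDs : Ds ≠ [])
    (hsafe : IntervalSafe Cs Ds)
    (hnorm : ∀ c ∈ Cs, NormalizedO K O c) :
    EntailsShift K O Cs Ds ↔ ∀ c ∈ Cs, ∃ d ∈ Ds, EntailsShift K O [c] [d] := by
  refine ⟨fun h c hc => ?_, entailsShift_of_forall_exists⟩
  obtain ⟨d₀, hd₀⟩ := List.exists_mem_of_ne_nil Ds hDs
  by_cases hsat : ∃ I : Interp, satOplus I K O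
  swap
  · exact ⟨d₀, hd₀, entailsShift_of_not_satOplus hsat _ _⟩
  by_cases hbot : c = SPL.bot
  · exact ⟨d₀, hd₀, hbot ▸ entailsShift_bot _⟩
  have hn := hnorm c hc
  have hroot : canonModel.root ∈ c.sem (canonModel K O c) :=
    canonModel.mem_sem_of_subAt hn rfl hbot fun _ => id
  obtain ⟨d, hd, hroot_d⟩ := h _ (canonModel.satKB_kminus hn)
    (canonModel.satQ_posOplus hn hsat) ⟨c, hc, hroot⟩
  exact ⟨d, hd, entailsShift_of_root_mem_canonModel (hsafe.singleton hc hd) hroot_d⟩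

/-- for every interval-safe PL subsumption query
    `σ = (C₁ ⊔ … ⊔ C_m ⊑ D₁ ⊔ … ⊔ Dₙ)` with each `Cᵢ` normalized w.r.t. `K` and `O`:
    `K_O⁻ ∪ pos(O_K⁺) ⊨ σ` iff for every `i` there is `j` with
    `K_O⁻ ∪ pos(O_K⁺) ⊨ Cᵢ ⊑ Dⱼ`. -/
theorem statement_11 (K : Set PLAx) (O : Set HAx) (Cs Ds : PLC)
    (hK : K.Finite) (hO : O.Finite) (hCs : Cs ≠ []) (hDs : Ds ≠ [])
    (hsig : (rNamesPL K ∪ rNamesL Cs ∪ rNamesL Ds) ∩ rNamesH O = ∅)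
    (hsafe : IntervalSafe Cs Ds)
    (hnorm : ∀ c ∈ Cs, NormalizedO K O c) :
    EntailsShift K O Cs Ds ↔ ∀ c ∈ Cs, ∃ d ∈ Ds, EntailsShift K O [c] [d] :=
  statement_11_general K O Cs Ds hDs hsafe hnorm

end PLPaper
end

section
/- For every finite set BP of PL concepts there exist a set BP* of PL concepts in single-atom form and a knowledge base O* consisting only of definitions B ≡ A₁ ⊓ … ⊓ Aₙ between a fresh concept name and a conjunction of concept names (hence expressible in both EL and DL-lite_horn), such that for every PLSO instance (K, O, C ⊑ D) with C ∈ BP there is a corresponding C* ∈ BP* with: K ∪ O ⊨ C ⊑ D if and only if K ∪ O ∪ O* ⊨ C* ⊑ D. Moreover BP* and O* can be computed in time linear in the size of BP. -/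
/-! At every level of nesting, the top-level concept names `A₁ ⊓ … ⊓ Aₙ` (`n ≥ 2`) of a disjunct
are replaced by one fresh name `B`, recorded in the definition `B ≡ A₁ ⊓ … ⊓ Aₙ`, and disjuncts
containing `⊥` (which are empty) are dropped. In every model of the definitions the translation has
the same extension as the original concept. Conversely the definitions are conservative: a model of
`K ∪ O` becomes a model of them by reinterpreting only the fresh names, which occur neither in `K`,
`O`, `C` nor `D`. The fresh names are `N + encode [A₁, …, Aₙ]` with `N` above every name of `BP`.
Merging names only removes `⊓`s, so the translation does not grow, and the definitions are paid for
by the names they merge. -/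

namespace PLPaper

def SPL.hasBot : SPL → Bool
  | .bot => true
  | .ex _ c => c.hasBot
  | .inter c d => c.hasBot || d.hasBot
  | _ => false

theorem SPL.sem_eq_empty_of_hasBot (I : Interp) :
    ∀ {C : SPL}, C.hasBot = true → C.sem I = ∅
  | .bot, _ => rfl
  | .ex _ c, h => by simp [SPL.sem, sem_eq_empty_of_hasBot I (C := c) h]
  | .inter c d, h => by
      rcases Bool.or_eq_true_iff.mp h with h | h <;> simp [SPL.sem, sem_eq_empty_of_hasBot I h]

/-- `C₁ ⊓ (C₂ ⊓ (… ⊓ Cₙ))`, with the junk value `⊥` for `[]`. -/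
def conjOf : List SPL → SPL
  | [] => .bot
  | [x] => x
  | x :: y :: xs => .inter x (conjOf (y :: xs))

theorem mem_sem_conjOf (I : Interp) (d : I.Δ) :
    ∀ {L : List SPL}, L ≠ [] → (d ∈ (conjOf L).sem I ↔ ∀ y ∈ L, d ∈ y.sem I)
  | [x], _ => by simp [conjOf]
  | x :: y :: ys, _ => by
      simp [conjOf, SPL.sem, mem_sem_conjOf I d (L := y :: ys) (List.cons_ne_nil _ _)]

theorem size_conjOf : ∀ {L : List SPL}, L ≠ [] →
    (conjOf L).size + 1 = (L.map SPL.size).sum + L.length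
  | [x], _ => by simp [conjOf]
  | x :: y :: ys, _ => by
      have := size_conjOf (L := y :: ys) (List.cons_ne_nil _ _)
      simp only [conjOf, SPL.size, List.map_cons, List.sum_cons, List.length_cons] at this ⊢
      omega

theorem atomList_conjOf : ∀ L : List SPL, (conjOf L).atomList = L.flatMap SPL.atomList
  | [] => rfl
  | [x] => by simp [conjOf]
  | x :: y :: ys => by simp [conjOf, SPL.atomList, atomList_conjOf (y :: ys)]

theorem saAux_conjOf : ∀ {L : List SPL}, L ≠ [] → (∀ y ∈ L, SAaux y) → SAaux (conjOf L)
  | [x], _, h => by simpa [conjOf] using h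
  | x :: y :: ys, _, h => by
      simp only [List.mem_cons, forall_eq_or_imp] at h
      exact ⟨h.1, saAux_conjOf (List.cons_ne_nil _ _) (by simpa using h.2)⟩

/-! ### The single-atom translation -/

section Translation

variable (fresh : List ℕ → ℕ)

def mergedAtom : List ℕ → List SPL
  | [] => []
  | [a] => [.atom a]
  | as => [.atom (fresh as)]

def mergedAtomDef : List ℕ → List CDef
  | [] => []
  | [_] => []
  | as => [(fresh as, as)]

/-- The top-level conjuncts of `C` other than concept names, with their fillers translated. -/
def SPL.trConjuncts : SPL → List SPL
  | .ival f l u => [.ival f l u]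
  | .ex r c => [.ex r (conjOf (mergedAtom fresh c.atomList ++ c.trConjuncts))]
  | .inter c d => c.trConjuncts ++ d.trConjuncts
  | _ => []

def SPL.tr (C : SPL) : SPL := conjOf (mergedAtom fresh C.atomList ++ C.trConjuncts fresh)

def SPL.fillerDefs : SPL → List CDef
  | .ex _ c => mergedAtomDef fresh c.atomList ++ c.fillerDefs
  | .inter c d => c.fillerDefs ++ d.fillerDefs
  | _ => []

def SPL.defs (C : SPL) : List CDef := mergedAtomDef fresh C.atomList ++ C.fillerDefs fresh

theorem SPL.trConjuncts_ex (r : ℕ) (c : SPL) :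
    (SPL.ex r c).trConjuncts fresh = [.ex r (c.tr fresh)] := rfl

theorem length_mergedAtom (as : List ℕ) : (mergedAtom fresh as).length = min as.length 1 := by
  match as with
  | [] | [_] | _ :: _ :: _ => simp [mergedAtom]

theorem SPL.length_atomList_add_length_trConjuncts_pos :
    ∀ {C : SPL}, C.hasBot = false → 0 < C.atomList.length + (C.trConjuncts fresh).length
  | .atom _, _ | .ival _ _ _, _ | .ex _ _, _ => by simp [SPL.atomList, SPL.trConjuncts]
  | .inter c d, h => by
      have := length_atomList_add_length_trConjuncts_pos (C := c) (Bool.or_eq_false_iff.mp h).1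
      simp only [SPL.atomList, SPL.trConjuncts, List.length_append]
      omega

theorem SPL.mergedAtom_append_trConjuncts_ne_nil {C : SPL} (h : C.hasBot = false) :
    mergedAtom fresh C.atomList ++ C.trConjuncts fresh ≠ [] := by
  have := C.length_atomList_add_length_trConjuncts_pos fresh h
  rw [← List.length_pos_iff, List.length_append, length_mergedAtom]
  omega

section Semantics

variable {fresh} {I : Interp} {d : I.Δ}

theorem forall_mem_sem_mergedAtom {as : List ℕ}
    (hdef : ∀ df ∈ mergedAtomDef fresh as, I.satDef df) :
    (∀ y ∈ mergedAtom fresh as, d ∈ y.sem I) ↔ ∀ a ∈ as, d ∈ I.conc a := by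
  match as with
  | [] | [_] => simp [mergedAtom, SPL.sem]
  | a :: b :: t =>
      have hB : I.conc (fresh (a :: b :: t)) = _ := hdef _ (List.mem_singleton_self _)
      simp only [mergedAtom, List.mem_singleton, forall_eq, SPL.sem, hB, Set.mem_ofPred_eq]

theorem SPL.mem_sem_tr_iff {C : SPL} (hC : C.hasBot = false)
    (hdef : ∀ df ∈ mergedAtomDef fresh C.atomList, I.satDef df) :
    d ∈ (C.tr fresh).sem I ↔
      (∀ a ∈ C.atomList, d ∈ I.conc a) ∧ ∀ y ∈ C.trConjuncts fresh, d ∈ y.sem I := by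
  rw [SPL.tr, mem_sem_conjOf I d (C.mergedAtom_append_trConjuncts_ne_nil fresh hC),
    List.forall_mem_append, forall_mem_sem_mergedAtom hdef]

theorem SPL.mem_sem_iff_trConjuncts :
    ∀ {C : SPL}, C.hasBot = false → (∀ df ∈ C.fillerDefs fresh, I.satDef df) → ∀ d : I.Δ,
      (d ∈ C.sem I ↔ (∀ a ∈ C.atomList, d ∈ I.conc a) ∧ ∀ y ∈ C.trConjuncts fresh, d ∈ y.sem I)
  | .atom _, _, _, _ => by simp [SPL.sem, SPL.atomList, SPL.trConjuncts]
  | .ival _ _ _, _, _, _ => by simp [SPL.sem, SPL.atomList, SPL.trConjuncts]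
  | .ex r c, hC, hdef, d => by
      simp only [SPL.fillerDefs, List.forall_mem_append] at hdef
      have hc : ∀ e, e ∈ (c.tr fresh).sem I ↔ e ∈ c.sem I := fun e => by
        rw [c.mem_sem_tr_iff hC hdef.1, mem_sem_iff_trConjuncts (C := c) hC hdef.2]
      simp [SPL.sem, SPL.atomList, SPL.trConjuncts_ex, hc]
  | .inter c c', hC, hdef, d => by
      simp only [SPL.hasBot, Bool.or_eq_false_iff] at hC
      simp only [SPL.fillerDefs, List.forall_mem_append] at hdef
      simp only [SPL.sem, Set.mem_inter_iff, mem_sem_iff_trConjuncts hC.1 hdef.1,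
        mem_sem_iff_trConjuncts hC.2 hdef.2, SPL.atomList, SPL.trConjuncts,
        List.forall_mem_append]
      tauto

theorem SPL.sem_tr {C : SPL} (hC : C.hasBot = false) (hdef : ∀ df ∈ C.defs fresh, I.satDef df) :
    (C.tr fresh).sem I = C.sem I := by
  simp only [SPL.defs, List.forall_mem_append] at hdef
  ext d
  rw [C.mem_sem_tr_iff hC hdef.1, C.mem_sem_iff_trConjuncts hC hdef.2]

end Semantics

theorem saAux_of_mem_mergedAtom {as : List ℕ} {y : SPL} (hy : y ∈ mergedAtom fresh as) :
    SAaux y := by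
  match as with
  | [] | [_] | _ :: _ :: _ => simp_all [mergedAtom, SAaux]

theorem length_flatMap_atomList_mergedAtom (as : List ℕ) :
    ((mergedAtom fresh as).flatMap SPL.atomList).length ≤ 1 := by
  match as with
  | [] | [_] | _ :: _ :: _ => simp [mergedAtom, SPL.atomList]

theorem sum_size_mergedAtom (as : List ℕ) :
    ((mergedAtom fresh as).map SPL.size).sum = min as.length 1 := by
  match as with
  | [] | [_] | _ :: _ :: _ => simp [mergedAtom, SPL.size]

theorem SPL.singleAtomS_tr_of_trConjuncts {C : SPL} (hC : C.hasBot = false)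
    (h : ∀ y ∈ C.trConjuncts fresh, SAaux y ∧ y.atomList = []) : SingleAtomS (C.tr fresh) := by
  refine ⟨saAux_conjOf (C.mergedAtom_append_trConjuncts_ne_nil fresh hC) fun y hy => ?_, ?_⟩
  · rcases List.mem_append.mp hy with hy | hy
    exacts [saAux_of_mem_mergedAtom fresh hy, (h y hy).1]
  · rw [SPL.tr, atomList_conjOf, List.flatMap_append,
      List.flatMap_eq_nil_iff.mpr fun y hy => (h y hy).2, List.append_nil]
    exact length_flatMap_atomList_mergedAtom fresh _

theorem SPL.singleAtom_trConjuncts :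
    ∀ {C : SPL}, C.hasBot = false → ∀ y ∈ C.trConjuncts fresh, SAaux y ∧ y.atomList = []
  | .atom _, _ => by simp [SPL.trConjuncts]
  | .ival _ _ _, _ => by simp [SPL.trConjuncts, SAaux, SPL.atomList]
  | .ex _ c, hC => by
      have := c.singleAtomS_tr_of_trConjuncts fresh hC (singleAtom_trConjuncts (C := c) hC)
      simp_all [SPL.trConjuncts_ex, SAaux, SingleAtomS, SPL.atomList]
  | .inter c c', hC => by
      simp only [SPL.hasBot, Bool.or_eq_false_iff] at hC
      intro y hy
      rcases List.mem_append.mp hy with hy | hy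
      exacts [singleAtom_trConjuncts hC.1 y hy, singleAtom_trConjuncts hC.2 y hy]

theorem SPL.singleAtomS_tr {C : SPL} (hC : C.hasBot = false) : SingleAtomS (C.tr fresh) :=
  C.singleAtomS_tr_of_trConjuncts fresh hC (C.singleAtom_trConjuncts fresh hC)

theorem SPL.size_tr_add_one {C : SPL} (hC : C.hasBot = false) :
    (C.tr fresh).size + 1 = 2 * min C.atomList.length 1 +
      (((C.trConjuncts fresh).map SPL.size).sum + (C.trConjuncts fresh).length) := by
  rw [SPL.tr, size_conjOf (C.mergedAtom_append_trConjuncts_ne_nil fresh hC), List.map_append,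
    List.sum_append, List.length_append, sum_size_mergedAtom, length_mergedAtom]
  omega

/-- Each concept name costs `1` plus one `⊓`, which pays for the merged name. -/
theorem SPL.trConjuncts_size_le :
    ∀ {C : SPL}, C.hasBot = false →
      ((C.trConjuncts fresh).map SPL.size).sum + (C.trConjuncts fresh).length +
        2 * C.atomList.length ≤ C.size + 1
  | .atom _, _ | .ival _ _ _, _ => by simp [SPL.trConjuncts, SPL.atomList, SPL.size]
  | .ex _ c, hC => by
      have h1 := c.size_tr_add_one fresh hC
      have h2 := trConjuncts_size_le (C := c) hC
      simp only [SPL.trConjuncts_ex, SPL.atomList, SPL.size, List.map_cons, List.map_nil,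
        List.sum_cons, List.sum_nil, List.length_cons, List.length_nil]
      omega
  | .inter c c', hC => by
      simp only [SPL.hasBot, Bool.or_eq_false_iff] at hC
      have h1 := trConjuncts_size_le hC.1
      have h2 := trConjuncts_size_le hC.2
      simp only [SPL.trConjuncts, SPL.atomList, SPL.size, List.map_append, List.sum_append,
        List.length_append]
      omega

theorem SPL.size_tr_le {C : SPL} (hC : C.hasBot = false) : (C.tr fresh).size ≤ C.size := by
  have h1 := C.size_tr_add_one fresh hC
  have h2 := C.trConjuncts_size_le fresh hC
  omega

theorem SPL.mem_cNames_of_mem_atomList : ∀ {C : SPL} {a : ℕ}, a ∈ C.atomList → a ∈ C.cNames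
  | .atom _, _, h => by simpa [SPL.atomList, SPL.cNames] using h
  | .inter _ _, _, h => (List.mem_append.mp h).imp mem_cNames_of_mem_atomList
      mem_cNames_of_mem_atomList

theorem eq_of_mem_mergedAtomDef {as : List ℕ} {df : CDef} (h : df ∈ mergedAtomDef fresh as) :
    df = (fresh as, as) := by
  match as with
  | [] | [_] | _ :: _ :: _ => simp_all [mergedAtomDef]

theorem SPL.fillerDefs_spec :
    ∀ {C : SPL}, ∀ df ∈ C.fillerDefs fresh, df.1 = fresh df.2 ∧ ∀ b ∈ df.2, b ∈ C.cNames
  | .ex _ c, df, h => by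
      rcases List.mem_append.mp h with h | h
      · obtain rfl := eq_of_mem_mergedAtomDef fresh h
        exact ⟨rfl, fun b => c.mem_cNames_of_mem_atomList⟩
      · exact fillerDefs_spec (C := c) df h
  | .inter c c', df, h => by
      rcases List.mem_append.mp h with h | h
      · exact (fillerDefs_spec df h).imp_right fun h b hb => Or.inl (h b hb)
      · exact (fillerDefs_spec df h).imp_right fun h b hb => Or.inr (h b hb)
  | .atom _, _, h | .bot, _, h | .ival _ _ _, _, h => by simp [SPL.fillerDefs] at h

theorem SPL.defs_spec {C : SPL} :
    ∀ df ∈ C.defs fresh, df.1 = fresh df.2 ∧ ∀ b ∈ df.2, b ∈ C.cNames := by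
  intro df h
  rcases List.mem_append.mp h with h | h
  · obtain rfl := eq_of_mem_mergedAtomDef fresh h
    exact ⟨rfl, fun b => C.mem_cNames_of_mem_atomList⟩
  · exact C.fillerDefs_spec fresh df h

theorem defsSize_append (l₁ l₂ : List CDef) :
    defsSize (l₁ ++ l₂) = defsSize l₁ + defsSize l₂ := by
  simp [defsSize]

theorem defsSize_mergedAtomDef (as : List ℕ) :
    defsSize (mergedAtomDef fresh as) ≤ 2 * as.length := by
  match as with
  | [] | [_] | _ :: _ :: _ => simp [mergedAtomDef, defsSize]; try omega

theorem SPL.defsSize_fillerDefs :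
    ∀ C : SPL, defsSize (C.fillerDefs fresh) + 2 * C.atomList.length ≤ 2 * C.size
  | .ex _ c => by
      have h1 := defsSize_mergedAtomDef fresh c.atomList
      have h2 := defsSize_fillerDefs c
      simp only [SPL.fillerDefs, defsSize_append, SPL.atomList, SPL.size, List.length_nil]
      omega
  | .inter c c' => by
      have h1 := defsSize_fillerDefs c
      have h2 := defsSize_fillerDefs c'
      simp only [SPL.fillerDefs, defsSize_append, SPL.atomList, SPL.size, List.length_append]
      omega
  | .atom _ | .bot | .ival _ _ _ => by simp [SPL.fillerDefs, SPL.atomList, SPL.size, defsSize]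

theorem SPL.defsSize_defs_le (C : SPL) : defsSize (C.defs fresh) ≤ 2 * C.size := by
  have h1 := defsSize_mergedAtomDef fresh C.atomList
  have h2 := C.defsSize_fillerDefs fresh
  rw [SPL.defs, defsSize_append]
  omega

/-- Disjuncts containing `⊥` are empty and are dropped. -/
def trL (C : PLC) : PLC := (C.filter fun c => !c.hasBot).map (SPL.tr fresh)

def defsL (C : PLC) : List CDef := (C.filter fun c => !c.hasBot).flatMap (SPL.defs fresh)

theorem mem_filter_hasBot {C : PLC} {c : SPL} :
    c ∈ C.filter (fun c => !c.hasBot) ↔ c ∈ C ∧ c.hasBot = false := by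
  simp

theorem semL_trL {I : Interp} {C : PLC} (hdef : ∀ df ∈ defsL fresh C, I.satDef df) :
    semL I (trL fresh C) = semL I C := by
  have hsem : ∀ c ∈ C.filter (fun c => !c.hasBot), (c.tr fresh).sem I = c.sem I :=
    fun c hc => c.sem_tr (mem_filter_hasBot.mp hc).2
      fun df h => hdef df (List.mem_flatMap.mpr ⟨c, hc, h⟩)
  ext d
  simp only [semL, trL, List.mem_map, Set.mem_ofPred_eq]
  constructor
  · rintro ⟨_, ⟨c, hc, rfl⟩, hd⟩
    exact ⟨c, (mem_filter_hasBot.mp hc).1, hsem c hc ▸ hd⟩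
  · rintro ⟨c, hc, hd⟩
    cases hb : c.hasBot
    · have hc' := mem_filter_hasBot.mpr ⟨hc, hb⟩
      exact ⟨_, ⟨c, hc', rfl⟩, (hsem c hc').symm ▸ hd⟩
    · exact absurd (c.sem_eq_empty_of_hasBot I hb ▸ hd) (Set.notMem_empty d)

theorem singleAtomL_trL (C : PLC) : SingleAtomL (trL fresh C) := by
  rintro _ h
  obtain ⟨c, hc, rfl⟩ := List.mem_map.mp h
  exact c.singleAtomS_tr fresh (mem_filter_hasBot.mp hc).2

theorem defsL_spec {C : PLC} :
    ∀ df ∈ defsL fresh C, df.1 = fresh df.2 ∧ ∀ b ∈ df.2, b ∈ cNamesL C := by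
  intro df h
  obtain ⟨c, hc, h⟩ := List.mem_flatMap.mp h
  exact (c.defs_spec fresh df h).imp_right fun h b hb => ⟨c, (mem_filter_hasBot.mp hc).1, h b hb⟩

theorem sum_size_filter_le (C : PLC) (p : SPL → Bool) :
    ((C.filter p).map SPL.size).sum ≤ (C.map SPL.size).sum :=
  ((C.filter_sublist (p := p)).map SPL.size).sum_le_sum fun _ _ => Nat.zero_le _

theorem sizeL_trL_le (C : PLC) : sizeL (trL fresh C) ≤ sizeL C := by
  have := sum_size_filter_le C fun c => !c.hasBot
  have htr : (((C.filter fun c => !c.hasBot).map (SPL.tr fresh)).map SPL.size).sum ≤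
      ((C.filter fun c => !c.hasBot).map SPL.size).sum := by
    rw [List.map_map]
    exact List.sum_le_sum fun c hc => (c.size_tr_le fresh (mem_filter_hasBot.mp hc).2)
  simp only [sizeL, trL]
  omega

theorem defsSize_flatMap {α : Type*} (g : α → List CDef) (l : List α) :
    defsSize (l.flatMap g) = (l.map fun x => defsSize (g x)).sum := by
  induction l with
  | nil => rfl
  | cons x xs ih => simp [defsSize_append, ih]

theorem defsSize_defsL_le (C : PLC) : defsSize (defsL fresh C) ≤ 2 * sizeL C := by
  have := sum_size_filter_le C fun c => !c.hasBot
  have hdefs : ((C.filter fun c => !c.hasBot).map fun c => defsSize (c.defs fresh)).sum ≤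
      ((C.filter fun c => !c.hasBot).map fun c => 2 * c.size).sum :=
    List.sum_le_sum fun c _ => c.defsSize_defs_le fresh
  rw [List.sum_map_mul_left] at hdefs
  rw [defsL, defsSize_flatMap, sizeL]
  omega

end Translation

/-! ### Definitions of fresh names are conservative -/

def Interp.withConc (I : Interp) (f : ℕ → Set I.Δ) : Interp := { I with conc := f }

section WithConc

variable {I : Interp} {f : ℕ → Set I.Δ}

theorem SPL.sem_withConc : ∀ {c : SPL}, Set.EqOn f I.conc c.cNames → c.sem (I.withConc f) = c.sem I
  | .atom a, h => h rfl
  | .bot, _ | .ival _ _ _, _ => rfl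
  | .ex r c, h => by
      simp only [SPL.sem, sem_withConc (c := c) h]
      rfl
  | .inter c c', h => by
      rw [SPL.cNames, Set.eqOn_union] at h
      simp only [SPL.sem, sem_withConc h.1, sem_withConc h.2]
      rfl

theorem semL_withConc {C : PLC} (h : Set.EqOn f I.conc (cNamesL C)) :
    semL (I.withConc f) C = semL I C := by
  ext d
  simp only [semL, Set.mem_ofPred_eq]
  refine exists_congr fun c => and_congr_right fun hc => ?_
  rw [SPL.sem_withConc fun a ha => h ⟨c, hc, ha⟩]
  rfl

theorem Interp.satKB_withConc_iff {K : Set PLAx} (h : Set.EqOn f I.conc (cNamesPL K)) :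
    (I.withConc f).satKB K ↔ I.satKB K := by
  refine forall₂_congr fun ax hax => ?_
  have hax : Set.EqOn f I.conc ax.cNames := fun a ha => h ⟨ax, hax, ha⟩
  cases ax <;> simp_all [Interp.satAx, PLAx.cNames, Set.EqOn, Interp.withConc] <;> rfl

theorem HRole.semChain_withConc (rs : List HRole) :
    HRole.semChain (I.withConc f) rs = HRole.semChain I rs := by
  induction rs with
  | nil => rfl
  | cons r rs ih => simp only [HRole.semChain, ih]; rfl

theorem HAtom.sem_withConc {A : HAtom} (h : Set.EqOn f I.conc A.cNames) :
    A.sem (I.withConc f) = A.sem I := by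
  cases A with
  | name a => exact h rfl
  | _ => rfl

theorem Interp.satHKB_withConc_iff {O : Set HAx} (h : Set.EqOn f I.conc (cNamesH O)) :
    (I.withConc f).satHKB O ↔ I.satHKB O := by
  refine forall₂_congr fun ax hax => ?_
  have hax : Set.EqOn f I.conc ax.cNames := fun a ha => h ⟨ax, hax, ha⟩
  cases ax <;> simp_all [Interp.satHAx, HAx.cNames, Set.eqOn_union, HAtom.sem_withConc,
    HRole.semChain_withConc] <;> rfl

end WithConc

/-- Reinterpret each defined name by its definiens. -/
theorem Interp.exists_withConc_satDef (I : Interp) (defs : List CDef)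
    (hfun : ∀ df ∈ defs, ∀ df' ∈ defs, df.1 = df'.1 → df = df')
    (hbody : ∀ df ∈ defs, ∀ df' ∈ defs, df.1 ∉ df'.2) :
    ∃ f : ℕ → Set I.Δ, Set.EqOn f I.conc {a | ∀ df ∈ defs, df.1 ≠ a} ∧
      ∀ df ∈ defs, (I.withConc f).satDef df := by
  classical
  let f : ℕ → Set I.Δ := fun a =>
    if h : ∃ df ∈ defs, df.1 = a then {d | ∀ b ∈ h.choose.2, d ∈ I.conc b} else I.conc a
  have hf : Set.EqOn f I.conc {a | ∀ df ∈ defs, df.1 ≠ a} := fun a ha =>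
    dif_neg fun ⟨df, hdf, h⟩ => ha df hdf h
  refine ⟨f, hf, fun df hdf => ?_⟩
  have hex : ∃ df' ∈ defs, df'.1 = df.1 := ⟨df, hdf, rfl⟩
  have hchoose : hex.choose = df := hfun _ hex.choose_spec.1 df hdf hex.choose_spec.2
  have hdf_eq : f df.1 = {d | ∀ b ∈ df.2, d ∈ I.conc b} := by simp only [f, dif_pos hex, hchoose]
  change f df.1 = {d | ∀ b ∈ df.2, d ∈ f b}
  rw [hdf_eq]
  ext d
  refine forall₂_congr fun b hb => ?_
  rw [hf fun df' hdf' h => hbody df' hdf' df hdf (h ▸ hb)]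

theorem entailsKO_iff_entailsKODefs {K : Set PLAx} {O : Set HAx} {C D : PLC} {defs : List CDef}
    (hfun : ∀ df ∈ defs, ∀ df' ∈ defs, df.1 = df'.1 → df = df')
    (hbody : ∀ df ∈ defs, ∀ df' ∈ defs, df.1 ∉ df'.2)
    (hK : ∀ df ∈ defs, df.1 ∉ cNamesPL K) (hO : ∀ df ∈ defs, df.1 ∉ cNamesH O)
    (hC : ∀ df ∈ defs, df.1 ∉ cNamesL C) (hD : ∀ df ∈ defs, df.1 ∉ cNamesL D) :
    EntailsKO K O C D ↔ EntailsKODefs K O defs C D := by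
  refine ⟨fun h I hIK hIO _ => h I hIK hIO, fun h I hIK hIO => ?_⟩
  obtain ⟨f, hf, hdefs⟩ := I.exists_withConc_satDef defs hfun hbody
  have hagree {S : Set ℕ} (hS : ∀ df ∈ defs, df.1 ∉ S) : Set.EqOn f I.conc S :=
    fun a ha => hf fun df hdf h => hS df hdf (h ▸ ha)
  have := h (I.withConc f) ((Interp.satKB_withConc_iff (hagree hK)).mpr hIK)
    ((Interp.satHKB_withConc_iff (hagree hO)).mpr hIO) hdefs
  rwa [semL_withConc (hagree hC), semL_withConc (hagree hD)] at this

theorem entailsKO_iff_entailsKODefs_of_encode {K : Set PLAx} {O : Set HAx} {C D : PLC}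
    {defs : List CDef} {N : ℕ} (hhead : ∀ df ∈ defs, df.1 = N + Encodable.encode df.2)
    (hbody : ∀ df ∈ defs, ∀ b ∈ df.2, b < N)
    (hK : ∀ df ∈ defs, df.1 ∉ cNamesPL K) (hO : ∀ df ∈ defs, df.1 ∉ cNamesH O)
    (hC : ∀ df ∈ defs, df.1 ∉ cNamesL C) (hD : ∀ df ∈ defs, df.1 ∉ cNamesL D) :
    EntailsKO K O C D ↔ EntailsKODefs K O defs C D := by
  refine entailsKO_iff_entailsKODefs (fun df h df' h' he => Prod.ext he ?_)
    (fun df h df' h' hb => ?_) hK hO hC hD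
  · exact Encodable.encode_injective (by rw [hhead df h, hhead df' h'] at he; omega)
  · have := hbody df' h' _ hb
    rw [hhead df h] at this
    omega

theorem entailsKODefs_trL_iff (fresh : List ℕ → ℕ) {K : Set PLAx} {O : Set HAx} {C D : PLC}
    {defs : List CDef} (hsub : defsL fresh C ⊆ defs) :
    EntailsKODefs K O defs (trL fresh C) D ↔ EntailsKODefs K O defs C D :=
  forall_congr' fun I => imp_congr_right fun _ => imp_congr_right fun _ =>
    imp_congr_right fun hdefs => by rw [semL_trL fresh fun df h => hdefs df (hsub h)]

theorem SPL.cNames_finite : ∀ c : SPL, c.cNames.Finite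
  | .atom _ => Set.finite_singleton _
  | .bot | .ival _ _ _ => Set.finite_empty
  | .ex _ c => cNames_finite c
  | .inter c d => (cNames_finite c).union (cNames_finite d)

theorem exists_forall_cNamesL_lt (BP : Finset PLC) :
    ∃ N, ∀ C ∈ BP, ∀ a ∈ cNamesL C, a < N := by
  have hfin : (⋃ C ∈ BP, ⋃ c ∈ {c | c ∈ C}, c.cNames).Finite :=
    BP.finite_toSet.biUnion fun C _ => C.finite_toSet.biUnion fun c _ => c.cNames_finite
  obtain ⟨M, hM⟩ := hfin.bddAbove
  refine ⟨M + 1, fun C hC a ⟨c, hc, ha⟩ => Nat.lt_succ_of_le (hM ?_)⟩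
  simp only [Set.mem_iUnion]
  exact ⟨C, hC, c, hc, ha⟩

/-- for every finite set `BP` of PL concepts there are a set
    `BP* = tr '' BP` of PL concepts in single-atom form and a knowledge base `O*`
    consisting only of definitions `B ≡ A₁ ⊓ … ⊓ Aₙ` with fresh names `B`
    (hence expressible in both EL and DL-lite_horn), such that for every PLSO
    instance `(K, O, C ⊑ D)` with `C ∈ BP`, `K ∪ O ⊨ C ⊑ D` iff
    `K ∪ O ∪ O* ⊨ C* ⊑ D` where `C* = tr C ∈ BP*`; moreover `BP*` and `O*`
    can be computed in linear time (rendered here as a linear size bound). -/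
theorem statement_15 :
    ∃ k : ℕ, ∀ BP : Finset PLC,
      ∃ (tr : PLC → PLC) (Ostar : List CDef),
        (∀ C ∈ BP, SingleAtomL (tr C)) ∧
        (∀ df ∈ Ostar, ∀ C ∈ BP, df.1 ∉ cNamesL C) ∧
        ((∑ C ∈ BP, sizeL (tr C)) + defsSize Ostar ≤ k * ((∑ C ∈ BP, sizeL C) + 1)) ∧
        (∀ (K : Set PLAx) (O : Set HAx) (C D : PLC),
          C ∈ BP → K.Finite → O.Finite → C ≠ [] → D ≠ [] →
          ((rNamesPL K ∪ rNamesL C ∪ rNamesL D) ∩ rNamesH O = ∅) →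
          (∀ df ∈ Ostar, df.1 ∉ cNamesPL K ∧ df.1 ∉ cNamesH O ∧ df.1 ∉ cNamesL D) →
          (EntailsKO K O C D ↔ EntailsKODefs K O Ostar (tr C) D)) := by
  refine ⟨3, fun BP => ?_⟩
  obtain ⟨N, hN⟩ := exists_forall_cNamesL_lt BP
  let fresh : List ℕ → ℕ := fun as => N + Encodable.encode as
  let Ostar := BP.toList.flatMap (defsL fresh)
  have hsub {C : PLC} (hC : C ∈ BP) : defsL fresh C ⊆ Ostar :=
    fun _ h => List.mem_flatMap.mpr ⟨C, BP.mem_toList.mpr hC, h⟩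
  have hOstar : ∀ df ∈ Ostar, df.1 = fresh df.2 ∧ ∀ b ∈ df.2, b < N := fun df h => by
    obtain ⟨C, hC, h⟩ := List.mem_flatMap.mp h
    exact (defsL_spec fresh df h).imp_right fun h b hb => hN C (BP.mem_toList.mp hC) b (h b hb)
  have hfresh : ∀ df ∈ Ostar, ∀ C ∈ BP, df.1 ∉ cNamesL C := fun df hdf C hC ha => by
    have := hN C hC _ ha
    simp only [(hOstar df hdf).1, fresh] at this
    omega
  refine ⟨trL fresh, Ostar, fun C _ => singleAtomL_trL fresh C, hfresh, ?_, ?_⟩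
  · have htr := Finset.sum_le_sum fun C (_ : C ∈ BP) => sizeL_trL_le fresh C
    have hdefs : defsSize Ostar ≤ 2 * ∑ C ∈ BP, sizeL C := by
      rw [defsSize_flatMap, Finset.sum_map_toList, Finset.mul_sum]
      exact Finset.sum_le_sum fun C _ => defsSize_defsL_le fresh C
    omega
  · intro K O C D hC _ _ _ _ _ hfreshKOD
    rw [entailsKO_iff_entailsKODefs_of_encode (fun df h => (hOstar df h).1)
      (fun df h => (hOstar df h).2) (fun df h => (hfreshKOD df h).1)
      (fun df h => (hfreshKOD df h).2.1) (fun df h => hfresh df h C hC)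
      (fun df h => (hfreshKOD df h).2.2), entailsKODefs_trL_iff fresh (hsub hC)]

end PLPaper
end

section
/- Let PI be any set of problem instances (K, O, q) that contains all instances in which K = ∅, O is an EL knowledge base, and q is an EL inclusion (possibly sharing role names with O). Then there exists no shifting IBQ mechanism for PI. -/
/-! The description logic EL, used to show that no shifting IBQ mechanism exists
    when queries may share role names with the imported ontology. -/

namespace IBQEL

/-- EL concepts: concept names, `⊤`, intersections, existential restrictions. -/
inductive Cpt : Type
  | atom : ℕ → Cpt
  | top : Cpt
  | and : Cpt → Cpt → Cpt
  | ex : ℕ → Cpt → Cpt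

/-- An EL inclusion (GCI); an EL knowledge base is a set of these. -/
abbrev Ax := Cpt × Cpt

structure Interp : Type 1 where
  Δ : Type
  nonempty : Nonempty Δ
  conc : ℕ → Set Δ
  role : ℕ → Set (Δ × Δ)

def Cpt.sem (I : Interp) : Cpt → Set I.Δ
  | .atom a => I.conc a
  | .top => Set.univ
  | .and c d => c.sem I ∩ d.sem I
  | .ex r c => {x | ∃ y, (x, y) ∈ I.role r ∧ y ∈ c.sem I}

def Interp.sat (I : Interp) (K : Set Ax) : Prop :=
  ∀ ax ∈ K, Cpt.sem I ax.1 ⊆ Cpt.sem I ax.2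

/-- `K ∪ O ⊨ q`. -/
def entails (K O : Set Ax) (q : Ax) : Prop :=
  ∀ I : Interp, I.sat K → I.sat O → Cpt.sem I q.1 ⊆ Cpt.sem I q.2

def Cpt.cNames : Cpt → Set ℕ
  | .atom a => {a}
  | .and c d => c.cNames ∪ d.cNames
  | .ex _ c => c.cNames
  | _ => ∅

def sigC (K : Set Ax) : Set ℕ := {n | ∃ ax ∈ K, n ∈ Cpt.cNames ax.1 ∪ Cpt.cNames ax.2}

/-- An oracle query `A₁ ⊓ … ⊓ A_m ⊑ A_{m+1} ⊔ … ⊔ Aₙ` (rhs `⊥` when empty). -/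
structure OQuery : Type where
  lhs : List ℕ
  rhs : List ℕ

def Interp.satQ (I : Interp) (q : OQuery) : Prop :=
  {d | ∀ a ∈ q.lhs, d ∈ I.conc a} ⊆ {d | ∃ b ∈ q.rhs, d ∈ I.conc b}

/-- `pos(O')`: the queries over the concept names of `sig(O')` entailed by `O'`. -/
def pos (O : Set Ax) : Set OQuery :=
  {q | (∀ a ∈ q.lhs, a ∈ sigC O) ∧ (∀ b ∈ q.rhs, b ∈ sigC O) ∧
     ∀ I : Interp, I.sat O → I.satQ q}

/-- A problem instance `(K, O, q)`. -/
abbrev Inst := Set Ax × Set Ax × Ax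

/-- `(s, r)` is a shifting IBQ mechanism for `PI`: for every `(K, O, q) ∈ PI`,
    (1) `s(K) ⊆ K`, and (2) `r(s(K), pos(O ∪ (K \ s(K))), q) = true` iff `K ∪ O ⊨ q`. -/
def Mechanism (PI : Set Inst) (s : Set Ax → Set Ax)
    (r : Set Ax → Set OQuery → Ax → Bool) : Prop :=
  ∀ p ∈ PI, s p.1 ⊆ p.1 ∧
    (r (s p.1) (pos (p.2.1 ∪ (p.1 \ s p.1))) p.2.2 = true ↔ entails p.1 p.2.1 p.2.2)

/-! The mechanism only sees `s(K)`, `pos(O ∪ (K \ s(K)))` and `q`. With `K = ∅` the ontologies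
`{⊤ ⊑ ∃r.⊤}` and `∅` mention no concept names, and each has a model, so the only candidate
query `⊤ ⊑ ⊥` is not in `pos` of either: both `pos` sets are empty and the mechanism must give
the same answer for both. Yet `{⊤ ⊑ ∃r.⊤}` entails `⊤ ⊑ ∃r.⊤` and `∅` does not. -/

theorem Mechanism.entails_iff_of_pos_eq {PI : Set Inst} {s : Set Ax → Set Ax}
    {r : Set Ax → Set OQuery → Ax → Bool} (hM : Mechanism PI s r) {K O O' : Set Ax} {q : Ax}
    (h : (K, O, q) ∈ PI) (h' : (K, O', q) ∈ PI)
    (hpos : pos (O ∪ (K \ s K)) = pos (O' ∪ (K \ s K))) :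
    entails K O q ↔ entails K O' q := by
  rw [← (hM _ h).2, ← (hM _ h').2]
  exact Iff.of_eq (congrArg (r (s K) · q = true) hpos)

theorem Interp.sat_empty (I : Interp) : I.sat ∅ := fun _ h => h.elim

theorem Interp.not_satQ_nil (I : Interp) : ¬ I.satQ ⟨[], []⟩ := by
  obtain ⟨d⟩ := I.nonempty
  intro h
  obtain ⟨b, hb, -⟩ := h (show d ∈ {d | ∀ a ∈ ([] : List ℕ), d ∈ I.conc a} by simp)
  simp at hb

theorem sigC_empty : sigC ∅ = ∅ := by
  simp [sigC]

theorem sigC_singleton (c d : Cpt) : sigC {(c, d)} = c.cNames ∪ d.cNames := by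
  ext n
  simp [sigC]

theorem pos_eq_empty {O : Set Ax} (hsig : sigC O = ∅) (hsat : ∃ I : Interp, I.sat O) :
    pos O = ∅ := by
  refine Set.eq_empty_of_forall_notMem fun ⟨lhs, rhs⟩ ⟨hl, hr, hent⟩ => ?_
  simp only [hsig, Set.mem_empty_iff_false, imp_false] at hl hr
  obtain rfl : lhs = [] := List.eq_nil_iff_forall_not_mem.mpr hl
  obtain rfl : rhs = [] := List.eq_nil_iff_forall_not_mem.mpr hr
  obtain ⟨I, hI⟩ := hsat
  exact I.not_satQ_nil (hent I hI)

theorem entails_of_mem {K O : Set Ax} {q : Ax} (hq : q ∈ O) : entails K O q :=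
  fun _ _ hO => hO q hq

def Interp.onePoint (R : Set (Unit × Unit)) : Interp :=
  ⟨Unit, ⟨()⟩, fun _ => ∅, fun _ => R⟩

theorem onePoint_univ_sat_top_ex (r : ℕ) :
    (Interp.onePoint Set.univ).sat {(Cpt.top, Cpt.ex r Cpt.top)} := by
  rintro _ rfl x -
  exact ⟨(), Set.mem_univ _, Set.mem_univ _⟩

theorem not_entails_top_ex (r : ℕ) : ¬ entails ∅ ∅ (Cpt.top, Cpt.ex r Cpt.top) := by
  intro h
  obtain ⟨_, hy, -⟩ := h (Interp.onePoint ∅) (Interp.sat_empty _) (Interp.sat_empty _)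
    (show () ∈ Cpt.sem (Interp.onePoint ∅) Cpt.top from Set.mem_univ _)
  exact hy

/-- let `PI` be any set of problem instances containing all instances
    `(∅, O, q)` in which `O` is an EL knowledge base and `q` is an EL inclusion
    (possibly sharing role names with `O`). Then there is no shifting IBQ mechanism
    for `PI`. -/
theorem statement_19 (PI : Set Inst)
    (hPI : ∀ (O : Set Ax) (q : Ax), O.Finite → ((∅ : Set Ax), O, q) ∈ PI) :
    ¬ ∃ (s : Set Ax → Set Ax) (r : Set Ax → Set OQuery → Ax → Bool),
        Mechanism PI s r := by
  rintro ⟨s, r, hM⟩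
  set q : Ax := (Cpt.top, Cpt.ex 0 Cpt.top)
  have hpos : pos ({q} ∪ (∅ \ s ∅)) = pos (∅ ∪ (∅ \ s ∅)) := by
    simp only [Set.empty_sdiff, Set.union_empty]
    rw [pos_eq_empty (by simp [sigC_singleton, Cpt.cNames]) ⟨_, onePoint_univ_sat_top_ex 0⟩,
      pos_eq_empty sigC_empty ⟨_, Interp.sat_empty (Interp.onePoint ∅)⟩]
  have hiff := hM.entails_iff_of_pos_eq (hPI {q} q (Set.finite_singleton q))
    (hPI ∅ q Set.finite_empty) hpos
  exact not_entails_top_ex 0 (hiff.mp (entails_of_mem rfl))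

end IBQEL
end
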